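/- arXiv:2312.03495 — 7 statements merged into one kernel-verified Lean document; each statement's English description precedes it below -/
import Mathlib

section
/- Let G be a finite DAG with at most m source jobs. Then there exists an optimal (minimum-makespan) feasible schedule on m machines in which all sources are scheduled in the very first timeslot. -/
/-- A feasible `m`-machine schedule of the job set `X`: a list of timeslots,
each of size at most `m`, pairwise disjoint, covering exactly `X`, such that
whenever `prec u v`, job `u` is scheduled in a strictly earlier timeslot. -/
def IsSchedule {V : Type*} (prec : V → V → Prop) (m : ℕ)
    (X : Finset V) (σ : List (Finset V)) : Prop :=
  (∀ T ∈ σ, T.card ≤ m) ∧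
  (∀ v, v ∈ X ↔ ∃ i : Fin σ.length, v ∈ σ.get i) ∧
  (∀ i j : Fin σ.length, i ≠ j → Disjoint (σ.get i) (σ.get j)) ∧
  (∀ i j : Fin σ.length, ∀ u ∈ σ.get i, ∀ v ∈ σ.get j, prec u v → (i : ℕ) < (j : ℕ))

lemma isSchedule_cons {V : Type*} [DecidableEq V] {prec : V → V → Prop} {m : ℕ}
    {X S Y : Finset V} {σ : List (Finset V)}
    (hcard : S.card ≤ m) (hσ : IsSchedule prec m Y σ)
    (hdisj : Disjoint S Y) (hX : X = S ∪ Y)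
    (hmin : ∀ u ∈ X, ∀ v ∈ S, ¬ prec u v) :
    IsSchedule prec m X (S :: σ) := by
  obtain ⟨h1, h2, h3, h4⟩ := hσ
  have hsub : ∀ i : Fin σ.length, σ.get i ⊆ Y := fun i v hv => (h2 v).2 ⟨i, hv⟩
  refine ⟨?_, ?_, ?_, ?_⟩
  · rintro T hT
    rcases List.mem_cons.1 hT with rfl | hT
    · exact hcard
    · exact h1 T hT
  · intro v
    constructor
    · intro hv
      rw [hX, Finset.mem_union] at hv
      rcases hv with hv | hv
      · exact ⟨⟨0, Nat.succ_pos _⟩, hv⟩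
      · obtain ⟨⟨i, hi⟩, hvi⟩ := (h2 v).1 hv
        refine ⟨⟨i + 1, by simpa using Nat.succ_lt_succ hi⟩, ?_⟩
        simpa [List.get_eq_getElem] using hvi
    · rintro ⟨⟨i, hi⟩, hvi⟩
      rw [hX, Finset.mem_union]
      cases i with
      | zero => exact Or.inl (by simpa [List.get_eq_getElem] using hvi)
      | succ i =>
        refine Or.inr ((h2 v).2 ⟨⟨i, by simpa using Nat.lt_of_succ_lt_succ hi⟩, ?_⟩)
        simpa [List.get_eq_getElem] using hvi
  · rintro ⟨i, hi⟩ ⟨j, hj⟩ hij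
    have hij' : i ≠ j := by simpa [Fin.ext_iff] using hij
    cases i with
    | zero =>
      cases j with
      | zero => exact absurd rfl hij'
      | succ j =>
        have : (S :: σ).get ⟨j+1, hj⟩ = σ.get ⟨j, Nat.lt_of_succ_lt_succ hj⟩ := by
          simp [List.get_eq_getElem]
        rw [this]
        simp only [List.get_eq_getElem, List.getElem_cons_zero]
        exact hdisj.mono_right (hsub _)
    | succ i =>
      cases j with
      | zero =>
        have : (S :: σ).get ⟨i+1, hi⟩ = σ.get ⟨i, Nat.lt_of_succ_lt_succ hi⟩ := by
          simp [List.get_eq_getElem]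
        rw [this]
        simp only [List.get_eq_getElem, List.getElem_cons_zero]
        exact (hdisj.mono_right (hsub _)).symm
      | succ j =>
        have e1 : (S :: σ).get ⟨i+1, hi⟩ = σ.get ⟨i, Nat.lt_of_succ_lt_succ hi⟩ := by
          simp [List.get_eq_getElem]
        have e2 : (S :: σ).get ⟨j+1, hj⟩ = σ.get ⟨j, Nat.lt_of_succ_lt_succ hj⟩ := by
          simp [List.get_eq_getElem]
        rw [e1, e2]
        exact h3 _ _ (by simpa [Fin.ext_iff] using hij')
  · rintro ⟨i, hi⟩ ⟨j, hj⟩ u hu v hv hprec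
    have hXall : ∀ k : Fin (S :: σ).length, ∀ w ∈ (S :: σ).get k, w ∈ X := by
      rintro ⟨k, hk⟩ w hw
      rw [hX, Finset.mem_union]
      cases k with
      | zero => exact Or.inl (by simpa [List.get_eq_getElem] using hw)
      | succ k =>
        refine Or.inr (hsub ⟨k, Nat.lt_of_succ_lt_succ hk⟩ ?_)
        simpa [List.get_eq_getElem] using hw
    cases j with
    | zero =>
      exact absurd hprec (hmin u (hXall _ _ hu) v (by simpa [List.get_eq_getElem] using hv))
    | succ j =>
      cases i with
      | zero => exact Nat.succ_pos _
      | succ i =>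
        have e1 : (S :: σ).get ⟨i+1, hi⟩ = σ.get ⟨i, Nat.lt_of_succ_lt_succ hi⟩ := by
          simp [List.get_eq_getElem]
        have e2 : (S :: σ).get ⟨j+1, hj⟩ = σ.get ⟨j, Nat.lt_of_succ_lt_succ hj⟩ := by
          simp [List.get_eq_getElem]
        rw [e1] at hu; rw [e2] at hv
        have := h4 _ _ u hu v hv hprec
        simpa using Nat.succ_lt_succ this

lemma isSchedule_nil {V : Type*} {prec : V → V → Prop} {m : ℕ} :
    IsSchedule prec m (∅ : Finset V) [] := by
  refine ⟨by simp, ?_, ?_, ?_⟩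
  · intro v
    simp only [Finset.notMem_empty, false_iff]
    rintro ⟨i, _⟩
    exact i.elim0
  · intro i; exact i.elim0
  · intro i; exact i.elim0

lemma exists_schedule {V : Type*} [Fintype V] [DecidableEq V]
    (prec : V → V → Prop) (htrans : Transitive prec) (hirr : Irreflexive prec)
    {m : ℕ} (hm : 1 ≤ m) (X : Finset V) : ∃ σ, IsSchedule prec m X σ := by
  haveI : IsTrans V prec := ⟨htrans⟩
  haveI : IsIrrefl V prec := ⟨hirr⟩
  have wf : WellFounded prec := Finite.wellFounded_of_trans_of_irrefl prec
  induction X using Finset.strongInduction with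
  | _ X ih =>
    rcases X.eq_empty_or_nonempty with rfl | hne
    · exact ⟨[], isSchedule_nil⟩
    · obtain ⟨v, hvX, hvmin⟩ := wf.has_min (↑X) (by simpa using hne)
      rw [Finset.mem_coe] at hvX
      obtain ⟨σ, hσ⟩ := ih (X.erase v) (Finset.erase_ssubset hvX)
      refine ⟨{v} :: σ, isSchedule_cons (by simpa using hm) hσ ?_ ?_ ?_⟩
      · simp [Finset.disjoint_singleton_left]
      · ext x
        simp only [Finset.mem_union, Finset.mem_singleton, Finset.mem_erase]
        constructor
        · intro hx
          by_cases hxv : x = v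
          · exact Or.inl hxv
          · exact Or.inr ⟨hxv, hx⟩
        · rintro (rfl | ⟨-, hx⟩)
          · exact hvX
          · exact hx
      · intro u hu w hw
        rw [Finset.mem_singleton] at hw
        subst hw
        exact hvmin u (by simpa using hu)

/-- For a finite DAG with at most `m` sources there is an optimal (minimum
makespan) feasible `m`-machine schedule whose first timeslot contains all
the sources. -/
theorem stmt1 {V : Type*} [Fintype V] [DecidableEq V]
    (prec : V → V → Prop) (htrans : Transitive prec) (hirr : Irreflexive prec)
    (m : ℕ) (hsrc : {v : V | ∀ u, ¬ prec u v}.ncard ≤ m) :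
    ∃ σ : List (Finset V), IsSchedule prec m Finset.univ σ ∧
      (∀ τ : List (Finset V), IsSchedule prec m Finset.univ τ → σ.length ≤ τ.length) ∧
      ∀ v : V, (∀ u, ¬ prec u v) → v ∈ σ.headI := by
  classical
  cases isEmpty_or_nonempty V with
  | inl h =>
    refine ⟨[], ⟨by simp, ?_, fun i => i.elim0, fun i => i.elim0⟩,
      fun τ _ => Nat.zero_le _, fun v => (IsEmpty.false v).elim⟩
    intro v; exact (IsEmpty.false v).elim
  | inr h =>
    haveI : IsTrans V prec := ⟨htrans⟩
    haveI : IsIrrefl V prec := ⟨hirr⟩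
    have wf : WellFounded prec := Finite.wellFounded_of_trans_of_irrefl prec
    obtain ⟨v₀, -, hmin0⟩ := wf.has_min Set.univ (Set.univ_nonempty)
    have hv₀ : ∀ u, ¬ prec u v₀ := fun u hu => hmin0 u (Set.mem_univ u) hu
    set Src : Finset V := Finset.univ.filter (fun v => ∀ u, ¬ prec u v) with hSrcdef
    have hSrcmem : ∀ v, v ∈ Src ↔ ∀ u, ¬ prec u v := by
      intro v; simp [hSrcdef]
    have hcoe : ({v : V | ∀ u, ¬ prec u v} : Set V) = ↑Src := by
      ext v; simp [hSrcmem]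
    have hScard : Src.card ≤ m := by
      rw [hcoe, Set.ncard_coe_finset] at hsrc; exact hsrc
    have hm : 1 ≤ m :=
      le_trans (Finset.card_pos.2 ⟨v₀, (hSrcmem v₀).2 hv₀⟩) hScard
    have hex : ∃ n, ∃ σ, IsSchedule prec m (Finset.univ : Finset V) σ ∧ σ.length = n := by
      obtain ⟨σ, hσ⟩ := exists_schedule prec htrans hirr hm Finset.univ
      exact ⟨σ.length, σ, hσ, rfl⟩
    obtain ⟨σ₀, hσ₀, hlen⟩ := Nat.find_spec hex
    have hopt : ∀ τ, IsSchedule prec m (Finset.univ : Finset V) τ →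
        σ₀.length ≤ τ.length := by
      intro τ hτ
      rw [hlen]
      exact Nat.find_min' hex ⟨τ, hτ, rfl⟩
    clear hlen
    obtain ⟨h1, h2, h3, h4⟩ := hσ₀
    obtain ⟨i0, hi0⟩ := (h2 v₀).1 (Finset.mem_univ v₀)
    match σ₀, h1, h2, h3, h4, hopt, i0, hi0 with
    | [], h1, h2, h3, h4, hopt, i0, hi0 => exact i0.elim0
    | A :: rest, h1, h2, h3, h4, hopt, i0, hi0 =>
    clear hi0 i0
    -- every element of A is a source
    have hA : A ⊆ Src := by
      intro a ha
      rw [hSrcmem]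
      intro u hu
      obtain ⟨⟨j, hj⟩, hju⟩ := (h2 u).1 (Finset.mem_univ u)
      have := h4 ⟨j, hj⟩ ⟨0, Nat.succ_pos _⟩ u hju a
        (by simpa [List.get_eq_getElem] using ha) hu
      simpa using this
    refine ⟨Src :: rest.map (· \ Src), ⟨?_, ?_, ?_, ?_⟩, ?_, ?_⟩
    · rintro T hT
      rcases List.mem_cons.1 hT with rfl | hT
      · exact hScard
      · obtain ⟨T', hT', rfl⟩ := List.mem_map.1 hT
        exact le_trans (Finset.card_le_card (Finset.sdiff_subset))
          (h1 T' (List.mem_cons_of_mem _ hT'))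
    · intro v
      simp only [Finset.mem_univ, true_iff]
      by_cases hvS : v ∈ Src
      · exact ⟨⟨0, Nat.succ_pos _⟩, hvS⟩
      · obtain ⟨⟨i, hi⟩, hvi⟩ := (h2 v).1 (Finset.mem_univ v)
        cases i with
        | zero =>
          exact absurd (hA (by simpa [List.get_eq_getElem] using hvi)) hvS
        | succ i =>
          have hi' : i < rest.length := Nat.lt_of_succ_lt_succ hi
          refine ⟨⟨i + 1, by simpa using Nat.succ_lt_succ hi'⟩, ?_⟩
          have : v ∈ rest.get ⟨i, hi'⟩ := by simpa [List.get_eq_getElem] using hvi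
          simpa [List.get_eq_getElem, Finset.mem_sdiff, hvS] using this
    · rintro ⟨i, hi⟩ ⟨j, hj⟩ hij
      have hij' : i ≠ j := by simpa [Fin.ext_iff] using hij
      have hlm : (rest.map (· \ Src)).length = rest.length := by simp
      cases i with
      | zero =>
        cases j with
        | zero => exact absurd rfl hij'
        | succ j =>
          have hj' : j < rest.length := by
            have := Nat.lt_of_succ_lt_succ hj; simpa using this
          simp only [List.get_eq_getElem, List.getElem_cons_zero,
            List.getElem_cons_succ, List.getElem_map]
          exact Finset.disjoint_sdiff
      | succ i =>
        cases j with
        | zero =>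
          have hi' : i < rest.length := by
            have := Nat.lt_of_succ_lt_succ hi; simpa using this
          simp only [List.get_eq_getElem, List.getElem_cons_zero,
            List.getElem_cons_succ, List.getElem_map]
          exact Finset.sdiff_disjoint
        | succ j =>
          have hi' : i < rest.length := by
            have := Nat.lt_of_succ_lt_succ hi; simpa using this
          have hj' : j < rest.length := by
            have := Nat.lt_of_succ_lt_succ hj; simpa using this
          simp only [List.get_eq_getElem, List.getElem_cons_succ, List.getElem_map]
          have hd := h3 ⟨i+1, by simpa using Nat.succ_lt_succ hi'⟩
            ⟨j+1, by simpa using Nat.succ_lt_succ hj'⟩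
            (by simpa [Fin.ext_iff] using hij')
          simp only [List.get_eq_getElem, List.getElem_cons_succ] at hd
          exact hd.mono Finset.sdiff_subset Finset.sdiff_subset
    · rintro ⟨i, hi⟩ ⟨j, hj⟩ u hu v hv hprec
      cases j with
      | zero =>
        have hvS : v ∈ Src := by simpa [List.get_eq_getElem] using hv
        exact absurd hprec ((hSrcmem v).1 hvS u)
      | succ j =>
        cases i with
        | zero => exact Nat.succ_pos _
        | succ i =>
          have hi' : i < rest.length := by
            have := Nat.lt_of_succ_lt_succ hi; simpa using this
          have hj' : j < rest.length := by
            have := Nat.lt_of_succ_lt_succ hj; simpa using this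
          simp only [List.get_eq_getElem, List.getElem_cons_succ, List.getElem_map] at hu hv
          have := h4 ⟨i+1, by simpa using Nat.succ_lt_succ hi'⟩
            ⟨j+1, by simpa using Nat.succ_lt_succ hj'⟩
            u (by simpa [List.get_eq_getElem] using (Finset.mem_sdiff.1 hu).1)
            v (by simpa [List.get_eq_getElem] using (Finset.mem_sdiff.1 hv).1) hprec
          simpa using this
    · intro τ hτ
      simpa using hopt τ hτ
    · intro v hv
      simpa [List.headI] using (hSrcmem v).2 hv
end

section
/- Let σ = (T₁,…,T_M) be a feasible m-machine schedule of a DAG G, let s ∈ T_i be a sink of G, and let v ∈ T_j be a job with j > i such that all predecessors of v lie in T₁ ∪ … ∪ T_{i-1}. Then the schedule obtained by swapping s and v (placing v in T_i and s in T_j) is feasible and has the same makespan. -/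
open Finset

lemma Finset.card_insert_erase_le {α : Type*} [DecidableEq α] {T : Finset α} {a b : α}
    (hb : b ∈ T) : #(insert a (T.erase b)) ≤ #T :=
  (card_insert_le a _).trans_eq (card_erase_add_one hb)

section

variable {V : Type*}

def ScheduledAt (σ : List (Finset V)) (x : V) (k : ℕ) : Prop :=
  ∃ hk : k < σ.length, x ∈ σ[k]

lemma ScheduledAt.of_mem_get {σ : List (Finset V)} {x : V} {k : Fin σ.length}
    (h : x ∈ σ.get k) : ScheduledAt σ x k :=
  ⟨k.2, h⟩

lemma isSchedule_iff {prec : V → V → Prop} {m : ℕ} {X : Finset V} {σ : List (Finset V)} :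
    IsSchedule prec m X σ ↔
      (∀ T ∈ σ, #T ≤ m) ∧
      (∀ x, x ∈ X ↔ ∃ k, ScheduledAt σ x k) ∧
      (∀ x k l, ScheduledAt σ x k → ScheduledAt σ x l → k = l) ∧
      (∀ u w k l, ScheduledAt σ u k → ScheduledAt σ w l → prec u w → k < l) := by
  unfold IsSchedule ScheduledAt
  refine and_congr Iff.rfl (and_congr ?_ (and_congr ?_ ?_))
  · simp [Fin.exists_iff]
  · simp only [Fin.forall_iff, Finset.disjoint_left, List.get_eq_getElem, ne_eq, Fin.ext_iff]
    constructor
    · rintro h x k l ⟨hk, hxk⟩ ⟨hl, hxl⟩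
      by_contra hkl
      exact h k hk l hl hkl hxk hxl
    · intro h k hk l hl hkl x hxk hxl
      exact hkl (h x k l ⟨hk, hxk⟩ ⟨hl, hxl⟩)
  · simp only [Fin.forall_iff, List.get_eq_getElem]
    constructor
    · rintro h u w k l ⟨hk, hu⟩ ⟨hl, hw⟩
      exact h k hk l hl u hu w hw
    · intro h k hk l hl u hu w hw
      exact h u w k l ⟨hk, hu⟩ ⟨hl, hw⟩

section Swap

variable [DecidableEq V] {σ : List (Finset V)} {i j : Fin σ.length} {s v : V}

def swapJobs (σ : List (Finset V)) (i j : Fin σ.length) (s v : V) : List (Finset V) :=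
  (σ.set i (insert v ((σ.get i).erase s))).set j (insert s ((σ.get j).erase v))

@[simp]
lemma length_swapJobs : (swapJobs σ i j s v).length = σ.length := by
  simp [swapJobs]

lemma scheduledAt_swapJobs_iff
    (huniq : ∀ x k l, ScheduledAt σ x k → ScheduledAt σ x l → k = l)
    (hij : (i : ℕ) ≠ j) (hs : s ∈ σ.get i) (hv : v ∈ σ.get j) {x : V} {k : ℕ} :
    ScheduledAt (swapJobs σ i j s v) x k ↔
      if x = s then k = j else if x = v then k = i else ScheduledAt σ x k := by
  have hs_only : ∀ k (hk : k < σ.length), s ∈ σ[k] → k = i :=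
    fun k hk h => huniq s _ _ ⟨hk, h⟩ (ScheduledAt.of_mem_get hs)
  have hv_only : ∀ k (hk : k < σ.length), v ∈ σ[k] → k = j :=
    fun k hk h => huniq v _ _ ⟨hk, h⟩ (ScheduledAt.of_mem_get hv)
  unfold ScheduledAt
  simp only [swapJobs, List.getElem_set, List.length_set, List.get_eq_getElem]
  grind

lemma card_le_of_mem_swapJobs {m : ℕ} (hm : ∀ T ∈ σ, #T ≤ m) (hs : s ∈ σ.get i)
    (hv : v ∈ σ.get j) {T : Finset V} (hT : T ∈ swapJobs σ i j s v) : #T ≤ m := by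
  rcases List.mem_or_eq_of_mem_set hT with hT | rfl
  · rcases List.mem_or_eq_of_mem_set hT with hT | rfl
    · exact hm T hT
    · exact (card_insert_erase_le hs).trans (hm _ (List.get_mem σ i))
  · exact (card_insert_erase_le hv).trans (hm _ (List.get_mem σ j))

lemma exists_scheduledAt_swapJobs_iff
    (huniq : ∀ x k l, ScheduledAt σ x k → ScheduledAt σ x l → k = l)
    (hij : (i : ℕ) ≠ j) (hs : s ∈ σ.get i) (hv : v ∈ σ.get j) {x : V} :
    (∃ k, ScheduledAt (swapJobs σ i j s v) x k) ↔ ∃ k, ScheduledAt σ x k := by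
  simp only [scheduledAt_swapJobs_iff huniq hij hs hv]
  split_ifs with hxs hxv
  · subst hxs
    exact ⟨fun _ => ⟨i, .of_mem_get hs⟩, fun _ => ⟨j, rfl⟩⟩
  · subst hxv
    exact ⟨fun _ => ⟨j, .of_mem_get hv⟩, fun _ => ⟨i, rfl⟩⟩
  · rfl

lemma eq_of_scheduledAt_swapJobs
    (huniq : ∀ x k l, ScheduledAt σ x k → ScheduledAt σ x l → k = l)
    (hij : (i : ℕ) ≠ j) (hs : s ∈ σ.get i) (hv : v ∈ σ.get j) {x : V} {k l : ℕ}
    (hk : ScheduledAt (swapJobs σ i j s v) x k) (hl : ScheduledAt (swapJobs σ i j s v) x l) :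
    k = l := by
  rw [scheduledAt_swapJobs_iff huniq hij hs hv] at hk hl
  split_ifs at hk hl
  · exact hk.trans hl.symm
  · exact hk.trans hl.symm
  · exact huniq x k l hk hl

lemma lt_of_prec_of_scheduledAt_swapJobs {prec : V → V → Prop}
    (hprec : ∀ u w k l, ScheduledAt σ u k → ScheduledAt σ w l → prec u w → k < l)
    (huniq : ∀ x k l, ScheduledAt σ x k → ScheduledAt σ x l → k = l)
    (hij : (i : ℕ) < j) (hs : s ∈ σ.get i) (hsink : ∀ u, ¬ prec s u)
    (hv : v ∈ σ.get j) (hvv : ¬ prec v v)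
    (hpred : ∀ u, prec u v → ∃ k : Fin σ.length, (k : ℕ) < i ∧ u ∈ σ.get k)
    {u w : V} {k l : ℕ} (hu : ScheduledAt (swapJobs σ i j s v) u k)
    (hw : ScheduledAt (swapJobs σ i j s v) w l) (huw : prec u w) : k < l := by
  have hsv : s ≠ v := fun h => hij.ne (huniq s _ _ (.of_mem_get hs) (h ▸ .of_mem_get hv))
  have hus : u ≠ s := fun h => hsink w (h ▸ huw)
  rw [scheduledAt_swapJobs_iff huniq hij.ne hs hv, if_neg hus] at hu
  rw [scheduledAt_swapJobs_iff huniq hij.ne hs hv] at hw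
  by_cases hwv : w = v
  · subst hwv
    rw [if_neg hsv.symm, if_pos rfl] at hw
    rw [if_neg (fun h : u = w => hvv (h ▸ huw))] at hu
    obtain ⟨k', hk'i, hk'⟩ := hpred u huw
    rw [hw, huniq u k k' hu (.of_mem_get hk')]
    exact hk'i
  · rw [if_neg hwv] at hw
    obtain ⟨k₀, hkk₀, hu₀⟩ : ∃ k₀, k ≤ k₀ ∧ ScheduledAt σ u k₀ := by
      split_ifs at hu with huv
      · exact ⟨j, hu ▸ hij.le, huv ▸ .of_mem_get hv⟩
      · exact ⟨k, le_rfl, hu⟩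
    obtain ⟨l₀, hl₀l, hw₀⟩ : ∃ l₀, l₀ ≤ l ∧ ScheduledAt σ w l₀ := by
      split_ifs at hw with hws
      · exact ⟨i, hw ▸ hij.le, hws ▸ .of_mem_get hs⟩
      · exact ⟨l, le_rfl, hw⟩
    exact (hkk₀.trans_lt (hprec u w k₀ l₀ hu₀ hw₀ huw)).trans_le hl₀l

end Swap

theorem IsSchedule.swapJobs [DecidableEq V] {prec : V → V → Prop} {m : ℕ} {X : Finset V}
    {σ : List (Finset V)} {i j : Fin σ.length} {s v : V}
    (h : IsSchedule prec m X σ) (hij : (i : ℕ) < j)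
    (hs : s ∈ σ.get i) (hsink : ∀ u, ¬ prec s u) (hv : v ∈ σ.get j) (hvv : ¬ prec v v)
    (hpred : ∀ u, prec u v → ∃ k : Fin σ.length, (k : ℕ) < i ∧ u ∈ σ.get k) :
    IsSchedule prec m X (swapJobs σ i j s v) := by
  obtain ⟨hm, hcov, huniq, hprec⟩ := isSchedule_iff.mp h
  refine isSchedule_iff.mpr ⟨fun _ => card_le_of_mem_swapJobs hm hs hv, fun x => ?_,
    fun _ _ _ => eq_of_scheduledAt_swapJobs huniq hij.ne hs hv,
    fun _ _ _ _ => lt_of_prec_of_scheduledAt_swapJobs hprec huniq hij hs hsink hv hvv hpred⟩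
  rw [hcov x, exists_scheduledAt_swapJobs_iff huniq hij.ne hs hv]

end

theorem stmt4_general {V : Type*} [Fintype V] [DecidableEq V]
    (prec : V → V → Prop) (hirr : Irreflexive prec)
    (m : ℕ) (σ : List (Finset V)) (hfeas : IsSchedule prec m Finset.univ σ)
    (i j : Fin σ.length) (hij : (i : ℕ) < (j : ℕ)) (s v : V)
    (hs : s ∈ σ.get i) (hsink : ∀ u : V, ¬ prec s u)
    (hv : v ∈ σ.get j)
    (hpred : ∀ u : V, prec u v → ∃ k : Fin σ.length, (k : ℕ) < (i : ℕ) ∧ u ∈ σ.get k)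
    (σ' : List (Finset V))
    (hσ' : σ' = (σ.set (i : ℕ) (insert v ((σ.get i).erase s))).set (j : ℕ)
        (insert s ((σ.get j).erase v))) :
    IsSchedule prec m Finset.univ σ' ∧ σ'.length = σ.length := by
  subst hσ'
  exact ⟨hfeas.swapJobs hij hs hsink hv (hirr v) hpred, length_swapJobs⟩

/-- Swapping a sink `s ∈ T_i` with a job `v ∈ T_j` (`j > i`) all of whose
predecessors are scheduled strictly before timeslot `i` yields a feasible
schedule with the same makespan. -/
theorem stmt4 {V : Type*} [Fintype V] [DecidableEq V]
    (prec : V → V → Prop) (htrans : Transitive prec) (hirr : Irreflexive prec)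
    (m : ℕ) (σ : List (Finset V)) (hfeas : IsSchedule prec m Finset.univ σ)
    (i j : Fin σ.length) (hij : (i : ℕ) < (j : ℕ)) (s v : V)
    (hs : s ∈ σ.get i) (hsink : ∀ u : V, ¬ prec s u)
    (hv : v ∈ σ.get j)
    (hpred : ∀ u : V, prec u v → ∃ k : Fin σ.length, (k : ℕ) < (i : ℕ) ∧ u ∈ σ.get k)
    (σ' : List (Finset V))
    (hσ' : σ' = (σ.set (i : ℕ) (insert v ((σ.get i).erase s))).set (j : ℕ)
        (insert s ((σ.get j).erase v))) :
    IsSchedule prec m Finset.univ σ' ∧ σ'.length = σ.length :=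
  stmt4_general prec hirr m σ hfeas i j hij s v hs hsink hv hpred σ' hσ'
end

section
/- Let G be a finite DAG (order ≺ transitively closed), let Jobs = succ(A) ∩ pred[B] for antichains A,B with B ⊆ succ(A), and let B equal the set of sinks of G[Jobs]. Let X, Y ⊆ Jobs be antichains with Y ⊆ succ(X). Define RHS := Jobs ∩ succ(X) \ (succ(Y) ∪ B). Then succ(X) ∩ pred[sinks(G[RHS])] = RHS, i.e., the interval Int⟨X, sinks(G[RHS])⟩ has vertex set exactly RHS. -/
/-- The set of strict successors of members of `S`. -/
def succSet {V : Type*} (prec : V → V → Prop) (S : Set V) : Set V :=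
  {v | ∃ s ∈ S, prec s v}

/-- `S` together with all strict predecessors of members of `S` (`pred[S]`). -/
def predCl {V : Type*} (prec : V → V → Prop) (S : Set V) : Set V :=
  S ∪ {v | ∃ s ∈ S, prec v s}

/-- The sinks of the subgraph induced on `S`: members of `S` with no
successor inside `S`. -/
def sinksIn {V : Type*} (prec : V → V → Prop) (S : Set V) : Set V :=
  {v | v ∈ S ∧ ∀ w ∈ S, ¬ prec v w}

/-- The sinks of the whole DAG: jobs with no successor. -/
def sinksOf {V : Type*} (prec : V → V → Prop) : Set V :=
  {v | ∀ u, ¬ prec v u}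

/-- Claim on new sinks: with `Jobs = succ(A) ∩ pred[B]`, `B = sinks(G[Jobs])`,
antichains `X, Y ⊆ Jobs` with `Y ⊆ succ(X)`, and
`RHS = Jobs ∩ succ(X) \ (succ(Y) ∪ B)`, the interval
`Int⟨X, sinks(G[RHS])⟩` has vertex set exactly `RHS`. -/
theorem stmt7 {V : Type*} [Fintype V]
    (prec : V → V → Prop) (htrans : Transitive prec) (hirr : Irreflexive prec)
    (A B : Set V)
    (hA : ∀ a ∈ A, ∀ b ∈ A, ¬ prec a b) (hB : ∀ a ∈ B, ∀ b ∈ B, ¬ prec a b)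
    (hBA : B ⊆ succSet prec A)
    (Jobs : Set V) (hJobs : Jobs = succSet prec A ∩ predCl prec B)
    (hBsinks : B = sinksIn prec Jobs)
    (X Y : Set V) (hXJ : X ⊆ Jobs) (hYJ : Y ⊆ Jobs)
    (hX : ∀ a ∈ X, ∀ b ∈ X, ¬ prec a b) (hY : ∀ a ∈ Y, ∀ b ∈ Y, ¬ prec a b)
    (hYX : Y ⊆ succSet prec X)
    (RHS : Set V) (hRHS : RHS = (Jobs ∩ succSet prec X) \ (succSet prec Y ∪ B)) :
    succSet prec X ∩ predCl prec (sinksIn prec RHS) = RHS := by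
  have wf : WellFounded (fun a b => prec b a) := by
    haveI : IsTrans V (fun a b => prec b a) := ⟨fun a b c h1 h2 => htrans h2 h1⟩
    haveI : IsIrrefl V (fun a b => prec b a) := ⟨fun a => hirr a⟩
    exact Finite.wellFounded_of_trans_of_irrefl _
  have reach : ∀ v ∈ RHS, ∃ s ∈ sinksIn prec RHS, v = s ∨ prec v s := by
    intro v
    induction v using wf.induction with
    | _ v ih =>
      intro hv
      by_cases h : ∀ w ∈ RHS, ¬ prec v w
      · exact ⟨v, ⟨hv, h⟩, Or.inl rfl⟩
      · push_neg at h
        obtain ⟨w, hw, hvw⟩ := h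
        obtain ⟨s, hs, hws⟩ := ih w hvw hw
        refine ⟨s, hs, Or.inr ?_⟩
        rcases hws with rfl | hws
        · exact hvw
        · exact htrans hvw hws
  ext v
  simp only [Set.mem_inter_iff, predCl, Set.mem_union, Set.mem_setOf_eq]
  constructor
  · rintro ⟨hvX, hvp⟩
    rcases hvp with hs | ⟨s, hs, hvs⟩
    · exact hs.1
    · have hsR : s ∈ RHS := hs.1
      rw [hRHS] at hsR ⊢
      obtain ⟨⟨hsJ, _⟩, hsN⟩ := hsR
      refine ⟨⟨?_, hvX⟩, ?_⟩
      · rw [hJobs]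
        constructor
        · obtain ⟨x, hx, hxv⟩ := hvX
          have hxJ := hXJ hx
          rw [hJobs] at hxJ
          obtain ⟨a, ha, hax⟩ := hxJ.1
          exact ⟨a, ha, htrans hax hxv⟩
        · rw [hJobs] at hsJ
          rcases hsJ.2 with hsB | ⟨b, hb, hsb⟩
          · exact absurd (Or.inr hsB) hsN
          · exact Or.inr ⟨b, hb, htrans hvs hsb⟩
      · rintro (⟨y, hy, hyv⟩ | hvB)
        · exact hsN (Or.inl ⟨y, hy, htrans hyv hvs⟩)
        · have hvB' : v ∈ sinksIn prec Jobs := hBsinks ▸ hvB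
          exact hvB'.2 s hsJ hvs
  · intro hv
    refine ⟨(hRHS ▸ hv).1.2, ?_⟩
    obtain ⟨s, hs, hvs⟩ := reach v hv
    rcases hvs with rfl | hvs
    · exact Or.inl hs
    · exact Or.inr ⟨s, hs, hvs⟩
end

section
/- Let G be a finite DAG whose set of sources is S₀, and let σ = (S₀ ⊕ σ₀ ⊕ S₁ ⊕ σ₁ ⊕ … ⊕ σ_{q-1} ⊕ S_q) be a partial proper schedule, i.e., (A') V(σ_i) = succ(S_i) \ (succ[S_{i+1}] ∪ sinks(G)) for all 0 ≤ i < q, and (B') S_j ⊆ succ(S_i) ∪ sinks(G) for all 0 ≤ i < j ≤ q. Then the set of non-sink jobs appearing in σ equals V(G) \ (succ(S_q) ∪ sinks(G)). -/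
/-!
Along the schedule the successor sets shrink, `succ(S_j) ⊆ succ(S_i)` for `i ≤ j`, by (B') and
transitivity. A job of some `S_j` cannot lie in `succ(S_q) ⊆ succ(S_j)`, because a timeslot is an
antichain, and a job of `σ_i` avoids `succ(S_{i+1}) ⊇ succ(S_q)` by (A'). Conversely, a non-sink job
`v ∉ succ(S_q)` is either a source, hence in `S₀`, or lies above a source, hence in `succ(S₀)`;
then there is a first `i` with `v ∈ succ(S_i) \ succ(S_{i+1})`, and (A') puts `v` into
`S_{i+1}` or `σ_i`.
-/

lemma mem_foldr_union {V : Type*} [DecidableEq V] {l : List (Finset V)} {v : V} :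
    v ∈ l.foldr (· ∪ ·) ∅ ↔ ∃ T ∈ l, v ∈ T := by
  induction l with
  | nil => simp
  | cons a l ih => simp [ih]

lemma IsSchedule.not_prec_of_mem {V : Type*} {prec : V → V → Prop} {m : ℕ} {X : Finset V}
    {σ : List (Finset V)} (h : IsSchedule prec m X σ) {T : Finset V} (hT : T ∈ σ)
    {u w : V} (hu : u ∈ T) (hw : w ∈ T) : ¬ prec u w := fun huw => by
  obtain ⟨i, rfl⟩ := List.mem_iff_get.mp hT
  exact lt_irrefl _ (h.2.2.2 i i u hu w hw huw)

lemma Fin.exists_castSucc_and_not_succ {q : ℕ} {p : Fin (q + 1) → Prop} (h0 : p 0)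
    (hlast : ¬ p (Fin.last q)) : ∃ i : Fin q, p i.castSucc ∧ ¬ p i.succ := by
  by_contra! h
  exact hlast (Fin.induction h0 h (Fin.last q))

lemma exists_source_prec_of_prec {V : Type*} [Finite V] {prec : V → V → Prop}
    (htrans : Transitive prec) (hirr : Irreflexive prec) {u v : V} (huv : prec u v) :
    ∃ s, (∀ w, ¬ prec w s) ∧ prec s v := by
  have : IsTrans V prec := ⟨htrans⟩
  have : Std.Irrefl prec := ⟨hirr⟩
  obtain ⟨s, hsv, hmin⟩ :=
    (Finite.wellFounded_of_trans_of_irrefl prec).has_min {s | prec s v} ⟨u, huv⟩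
  exact ⟨s, fun w hws => hmin w (htrans hws hsv) hws, hsv⟩

section succSet

variable {V : Type*} {prec : V → V → Prop}

lemma succSet_subset_of_subset_succSet_union_sinksOf (htrans : Transitive prec) {S T : Set V}
    (hT : T ⊆ succSet prec S ∪ sinksOf prec) : succSet prec T ⊆ succSet prec S := by
  rintro v ⟨t, ht, htv⟩
  rcases hT ht with ⟨s, hs, hst⟩ | ht_sink
  · exact ⟨s, hs, htrans hst htv⟩
  · exact absurd htv (ht_sink v)

lemma disjoint_succSet_of_not_prec {S : Set V} (hS : ∀ u ∈ S, ∀ w ∈ S, ¬ prec u w) :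
    Disjoint S (succSet prec S) :=
  Set.disjoint_left.mpr fun _ hv ⟨s, hs, hsv⟩ => hS s hs _ hv hsv

end succSet

lemma mem_flatten_ofFn_cons_append_singleton {α : Type*} {q : ℕ} {S : Fin (q + 1) → α}
    {seg : Fin q → List α} {T : α} :
    T ∈ (List.ofFn fun i : Fin q => S i.castSucc :: seg i).flatten ++ [S (Fin.last q)] ↔
      (∃ j, S j = T) ∨ ∃ i, T ∈ seg i := by
  simp only [List.mem_append, List.mem_flatten, List.mem_ofFn, exists_exists_eq_and,
    List.mem_cons, List.not_mem_nil, or_false]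
  constructor
  · rintro (⟨i, rfl | hT⟩ | rfl)
    · exact .inl ⟨_, rfl⟩
    · exact .inr ⟨i, hT⟩
    · exact .inl ⟨_, rfl⟩
  · rintro (⟨j, rfl⟩ | ⟨i, hT⟩)
    · induction j using Fin.lastCases with
      | last => exact .inr rfl
      | cast i => exact .inl ⟨i, .inl rfl⟩
    · exact .inl ⟨i, .inr hT⟩

section PartialProperSchedule

variable {V : Type*} {prec : V → V → Prop} {q : ℕ} {S : Fin (q + 1) → Finset V}
  {seg : Fin q → List (Finset V)}

lemma mem_foldr_union_flatten_ofFn_iff [DecidableEq V] {v : V} :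
    v ∈ ((List.ofFn fun i : Fin q => S i.castSucc :: seg i).flatten ++ [S (Fin.last q)]).foldr
        (· ∪ ·) ∅ ↔
      (∃ j, v ∈ S j) ∨ ∃ i, ∃ T ∈ seg i, v ∈ T := by
  simp only [mem_foldr_union, mem_flatten_ofFn_cons_append_singleton]
  constructor
  · rintro ⟨T, ⟨j, rfl⟩ | ⟨i, hT⟩, hv⟩
    exacts [.inl ⟨j, hv⟩, .inr ⟨i, T, hT, hv⟩]
  · rintro (⟨j, hv⟩ | ⟨i, T, hT, hv⟩)
    exacts [⟨_, .inl ⟨j, rfl⟩, hv⟩, ⟨T, .inr ⟨i, hT⟩, hv⟩]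

lemma succSet_last_subset (htrans : Transitive prec)
    (hB' : ∀ i j : Fin (q + 1), i < j → (↑(S j) : Set V) ⊆ succSet prec ↑(S i) ∪ sinksOf prec)
    (j : Fin (q + 1)) :
    succSet prec ↑(S (Fin.last q)) ⊆ succSet prec ↑(S j) := by
  rcases (Fin.le_last j).eq_or_lt with hj | hj
  · rw [hj]
  · exact succSet_subset_of_subset_succSet_union_sinksOf htrans (hB' j _ hj)

lemma notMem_succSet_last_of_mem (htrans : Transitive prec)
    (hB' : ∀ i j : Fin (q + 1), i < j → (↑(S j) : Set V) ⊆ succSet prec ↑(S i) ∪ sinksOf prec)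
    (hS : ∀ j, ∀ u ∈ S j, ∀ w ∈ S j, ¬ prec u w)
    {j : Fin (q + 1)} {v : V} (hv : v ∈ S j) : v ∉ succSet prec ↑(S (Fin.last q)) :=
  fun hv_last => Set.disjoint_left.mp (disjoint_succSet_of_not_prec (hS j)) hv
    (succSet_last_subset htrans hB' j hv_last)

lemma notMem_succSet_last_of_mem_seg (htrans : Transitive prec)
    (hB' : ∀ i j : Fin (q + 1), i < j → (↑(S j) : Set V) ⊆ succSet prec ↑(S i) ∪ sinksOf prec)
    (hA' : ∀ i : Fin q, {v : V | ∃ T ∈ seg i, v ∈ T} =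
      succSet prec ↑(S i.castSucc) \ (succSet prec ↑(S i.succ) ∪ ↑(S i.succ) ∪ sinksOf prec))
    {i : Fin q} {v : V} (hv : ∃ T ∈ seg i, v ∈ T) : v ∉ succSet prec ↑(S (Fin.last q)) := by
  have hv : v ∈ {v : V | ∃ T ∈ seg i, v ∈ T} := hv
  rw [hA' i] at hv
  exact fun hv_last => hv.2 (.inl (.inl (succSet_last_subset htrans hB' i.succ hv_last)))

lemma mem_or_mem_seg_of_notMem_succSet_last [Finite V] (htrans : Transitive prec)
    (hirr : Irreflexive prec) (hS0 : (↑(S 0) : Set V) = {v : V | ∀ u, ¬ prec u v})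
    (hA' : ∀ i : Fin q, {v : V | ∃ T ∈ seg i, v ∈ T} =
      succSet prec ↑(S i.castSucc) \ (succSet prec ↑(S i.succ) ∪ ↑(S i.succ) ∪ sinksOf prec))
    {v : V} (hv_last : v ∉ succSet prec ↑(S (Fin.last q))) (hv_sink : v ∉ sinksOf prec) :
    (∃ j, v ∈ S j) ∨ ∃ i, ∃ T ∈ seg i, v ∈ T := by
  by_cases hv_source : ∀ u, ¬ prec u v
  · exact .inl ⟨0, by rw [← Finset.mem_coe, hS0]; exact hv_source⟩
  obtain ⟨u, hu⟩ := not_forall_not.mp hv_source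
  obtain ⟨s, hs, hsv⟩ := exists_source_prec_of_prec htrans hirr hu
  obtain ⟨i, hvi, hvi'⟩ := Fin.exists_castSucc_and_not_succ
    (p := fun j => v ∈ succSet prec ↑(S j)) ⟨s, hS0 ▸ hs, hsv⟩ hv_last
  by_cases hv_next : v ∈ S i.succ
  · exact .inl ⟨_, hv_next⟩
  · have hv : v ∈ {v : V | ∃ T ∈ seg i, v ∈ T} := by
      rw [hA' i]
      exact ⟨hvi, fun h => h.elim (fun h => h.elim hvi' hv_next) hv_sink⟩
    exact .inr ⟨i, hv⟩

end PartialProperSchedule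

/-- For a partial proper schedule
`σ = (S₀ ⊕ σ₀ ⊕ S₁ ⊕ σ₁ ⊕ … ⊕ σ_{q-1} ⊕ S_q)` with `S₀` the set of all
sources, conditions (A') and (B') imply that the non-sink jobs of `σ` are
exactly `V(G) \ (succ(S_q) ∪ sinks(G))`. -/
theorem stmt8 {V : Type*} [Fintype V] [DecidableEq V]
    (prec : V → V → Prop) (htrans : Transitive prec) (hirr : Irreflexive prec)
    (m q : ℕ) (S : Fin (q + 1) → Finset V) (seg : Fin q → List (Finset V))
    (σ : List (Finset V))
    (hσ : σ = (List.ofFn fun i : Fin q => (S i.castSucc) :: seg i).flatten ++ [S (Fin.last q)])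
    (hfeas : IsSchedule prec m (σ.foldr (· ∪ ·) ∅) σ)
    (hS0 : (↑(S 0) : Set V) = {v : V | ∀ u, ¬ prec u v})
    (hA' : ∀ i : Fin q, {v : V | ∃ T ∈ seg i, v ∈ T} =
      succSet prec ↑(S i.castSucc) \
        (succSet prec ↑(S i.succ) ∪ ↑(S i.succ) ∪ sinksOf prec))
    (hB' : ∀ i j : Fin (q + 1), i < j →
      (↑(S j) : Set V) ⊆ succSet prec ↑(S i) ∪ sinksOf prec) :
    (↑(σ.foldr (· ∪ ·) ∅) : Set V) \ sinksOf prec =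
      Set.univ \ (succSet prec ↑(S (Fin.last q)) ∪ sinksOf prec) := by
  subst hσ
  have hS : ∀ j, ∀ u ∈ S j, ∀ w ∈ S j, ¬ prec u w := fun j _ hu _ hw =>
    hfeas.not_prec_of_mem (mem_flatten_ofFn_cons_append_singleton.mpr (.inl ⟨j, rfl⟩)) hu hw
  ext v
  simp only [Set.mem_diff, Finset.mem_coe, mem_foldr_union_flatten_ofFn_iff, Set.mem_univ,
    true_and, Set.mem_union, not_or]
  refine ⟨fun ⟨hv, hv_sink⟩ => ⟨?_, hv_sink⟩, fun ⟨hv_last, hv_sink⟩ =>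
    ⟨mem_or_mem_seg_of_notMem_succSet_last htrans hirr hS0 hA' hv_last hv_sink, hv_sink⟩⟩
  rcases hv with ⟨j, hv⟩ | ⟨i, hv⟩
  · exact notMem_succSet_last_of_mem htrans hB' hS hv
  · exact notMem_succSet_last_of_mem_seg htrans hB' hA' hv
end

section
/- For any finite DAG G with at most m sources, there exists a feasible m-machine schedule of minimum makespan σ that admits a proper separator: σ = (S₀ ⊕ σ₀ ⊕ S₁ ⊕ σ₁ ⊕ … ⊕ S_ℓ ⊕ σ_ℓ), where S₀ is the set of sources, and (A) V(σ_i) = succ(S_i) \ (succ[S_{i+1}] ∪ sinks(G)) for all 0 ≤ i ≤ ℓ−1, (B) S_j ⊆ succ(S_i) ∪ sinks(G) for all 0 ≤ i < j ≤ ℓ, and (C) V(σ_ℓ) ⊆ sinks(G). -/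
open Finset

section

variable {V : Type*}

def sourcesOf (prec : V → V → Prop) : Set V :=
  {v | ∀ u, ¬ prec u v}

section WellFounded

variable [Finite V] {prec : V → V → Prop} [IsTrans V prec] [Std.Irrefl prec]

theorem exists_mem_sourcesOf_prec {v : V} (hv : v ∉ sourcesOf prec) :
    ∃ a ∈ sourcesOf prec, prec a v := by
  simp only [sourcesOf, Set.mem_ofPred_eq, not_forall, not_not] at hv
  obtain ⟨a, hav, hmin⟩ :=
    (Finite.wellFounded_of_trans_of_irrefl prec).has_min {a | prec a v} hv
  exact ⟨a, fun u hua => hmin u (_root_.trans hua hav) hua, hav⟩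

theorem sourcesOf_nonempty [Nonempty V] : (sourcesOf prec).Nonempty := by
  obtain ⟨v⟩ := ‹Nonempty V›
  by_cases hv : v ∈ sourcesOf prec
  · exact ⟨v, hv⟩
  · obtain ⟨a, ha, -⟩ := exists_mem_sourcesOf_prec hv
    exact ⟨a, ha⟩

end WellFounded

section TimeSchedule

variable [Fintype V] (prec : V → V → Prop) (m : ℕ)

def timeslot (f : V → ℕ) (t : ℕ) : Finset V :=
  univ.filter (f · = t)

@[simp]
theorem mem_timeslot {f : V → ℕ} {t : ℕ} {v : V} : v ∈ timeslot f t ↔ f v = t := by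
  simp [timeslot]

def timeslots (f : V → ℕ) (a b : ℕ) : List (Finset V) :=
  (List.range' a (b - a)).map (timeslot f)

@[simp]
theorem length_timeslots (f : V → ℕ) (a b : ℕ) : (timeslots f a b).length = b - a := by
  simp [timeslots]

theorem exists_mem_timeslots_iff {f : V → ℕ} {a b : ℕ} {v : V} :
    (∃ T ∈ timeslots f a b, v ∈ T) ↔ a ≤ f v ∧ f v < b := by
  simp only [timeslots, List.mem_map, List.mem_range'_1]
  constructor
  · rintro ⟨_, ⟨t, ht, rfl⟩, hv⟩
    rw [mem_timeslot] at hv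
    omega
  · intro hv
    exact ⟨_, ⟨f v, by omega, rfl⟩, mem_timeslot.2 rfl⟩

theorem timeslots_eq_cons (f : V → ℕ) {a b : ℕ} (hab : a < b) :
    timeslots f a b = timeslot f a :: timeslots f (a + 1) b := by
  rw [timeslots, show b - a = b - (a + 1) + 1 by omega, List.range'_succ]
  rfl

theorem timeslots_append (f : V → ℕ) {a b c : ℕ} (hab : a ≤ b) (hbc : b ≤ c) :
    timeslots f a b ++ timeslots f b c = timeslots f a c := by
  have h := List.range'_append (s := a) (m := b - a) (n := c - b) (step := 1)
  rw [show a + 1 * (b - a) = b by omega, show b - a + (c - b) = c - a by omega] at h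
  rw [timeslots, timeslots, timeslots, ← List.map_append, h]

theorem flatten_ofFn_timeslots (f : V → ℕ) {k : ℕ} (q : Fin (k + 1) → ℕ)
    (hq : Monotone q) :
    (List.ofFn fun i : Fin k => timeslots f (q i.castSucc) (q i.succ)).flatten =
      timeslots f (q 0) (q (Fin.last k)) := by
  induction k with
  | zero => simp [timeslots]
  | succ k ih =>
    rw [List.ofFn_succ, List.flatten_cons]
    have htail := ih (fun j => q j.succ) (hq.comp (Fin.strictMono_succ.monotone))
    simp only [Fin.succ_castSucc, Fin.succ_last] at htail
    rw [htail, Fin.castSucc_zero]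
    exact timeslots_append f (hq (Fin.zero_le _)) (hq (Fin.le_last _))

structure IsTimeSchedule (M : ℕ) (f : V → ℕ) : Prop where
  lt_makespan : ∀ v, f v < M
  card_timeslot_le : ∀ t, (timeslot f t).card ≤ m
  lt_of_prec : ∀ ⦃u v⦄, prec u v → f u < f v

variable {prec m}

theorem IsTimeSchedule.isSchedule {M : ℕ} {f : V → ℕ} (hf : IsTimeSchedule prec m M f) :
    IsSchedule prec m univ (timeslots f 0 M) := by
  have hget : ∀ i : Fin (timeslots f 0 M).length, (timeslots f 0 M).get i = timeslot f i := by
    intro i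
    rw [List.get_eq_getElem]
    simp [timeslots]
  refine ⟨?_, fun v => ?_, fun i j hij => ?_, fun i j u hu v hv huv => ?_⟩
  · simp only [timeslots, List.mem_map]
    rintro _ ⟨t, -, rfl⟩
    exact hf.card_timeslot_le t
  · simp only [mem_univ, true_iff]
    exact ⟨⟨f v, by simpa using hf.lt_makespan v⟩, by rw [hget, mem_timeslot]⟩
  · rw [hget, hget, disjoint_left]
    intro v hi hj
    rw [mem_timeslot] at hi hj
    exact hij (Fin.ext (hi.symm.trans hj))
  · rw [hget, mem_timeslot] at hu hv
    exact hu ▸ hv ▸ hf.lt_of_prec huv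

theorem IsSchedule.exists_isTimeSchedule {σ : List (Finset V)}
    (hσ : IsSchedule prec m univ σ) : ∃ f, IsTimeSchedule prec m σ.length f := by
  obtain ⟨hcard, hcover, hdisj, hprec⟩ := hσ
  choose g hg using fun v => (hcover v).1 (mem_univ v)
  refine ⟨fun v => g v, fun v => (g v).2, fun t => ?_,
    fun u v huv => hprec _ _ u (hg u) v (hg v) huv⟩
  by_cases ht : t < σ.length
  · refine (card_le_card fun v hv => ?_).trans (hcard _ (σ.get_mem ⟨t, ht⟩))
    rw [mem_timeslot] at hv
    exact (show g v = ⟨t, ht⟩ from Fin.ext hv) ▸ hg v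
  · convert Nat.zero_le m
    rw [card_eq_zero, eq_empty_iff_forall_notMem]
    intro v hv
    rw [mem_timeslot] at hv
    exact ht (hv ▸ (g v).2)

end TimeSchedule

theorem exists_max_image_of_bounded {α : Type*} {P : α → Prop} (Φ : α → ℕ) {B : ℕ}
    (hP : ∃ x, P x) (hB : ∀ x, P x → Φ x ≤ B) :
    ∃ x, P x ∧ ∀ y, P y → Φ y ≤ Φ x := by
  classical
  obtain ⟨x, hx⟩ := hP
  obtain ⟨y, hy, hyΦ⟩ :=
    Nat.findGreatest_spec (P := fun k => ∃ y, P y ∧ Φ y = k) (hB x hx) ⟨x, hx, rfl⟩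
  exact ⟨y, hy, fun z hz => hyΦ ▸ Nat.le_findGreatest (hB z hz) ⟨z, hz, rfl⟩⟩

def SourcesFirst (prec : V → V → Prop) (f : V → ℕ) : Prop :=
  ∀ v, f v = 0 ↔ v ∈ sourcesOf prec

theorem SourcesFirst.comp_swap [DecidableEq V] {prec : V → V → Prop} {f : V → ℕ} {s v : V}
    (hfs : SourcesFirst prec f) (hs : f s ≠ 0) (hv : f v ≠ 0) :
    SourcesFirst prec (f ∘ Equiv.swap s v) := by
  intro x
  simp only [Function.comp_apply, Equiv.swap_apply_def]
  split_ifs with hxs hxv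
  · simpa [hv] using mt (hfs x).2 (hxs ▸ hs)
  · simpa [hs] using mt (hfs x).2 (hxv ▸ hv)
  · exact hfs x

section Normalization

variable [Fintype V] {prec : V → V → Prop} {m M : ℕ} {f : V → ℕ}

theorem exists_isTimeSchedule [IsTrans V prec] [Std.Irrefl prec] (hm : 1 ≤ m) :
    ∃ M f, IsTimeSchedule prec m M f := by
  classical
  set n := Fintype.card V
  let e := Fintype.equivFin V
  let depth : V → ℕ := fun v => (univ.filter (prec · v)).card
  have hdepth_lt : ∀ v, depth v < n := fun v =>
    card_lt_univ_of_notMem (by simpa using irrefl v)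
  have hdepth_mono : ∀ ⦃u v⦄, prec u v → depth u < depth v := fun u v huv =>
    card_lt_card ⟨fun w hw => by simpa using _root_.trans (by simpa using hw) huv,
      fun h => irrefl u (by simpa using h (by simpa using huv))⟩
  -- slots of size one: `e v` is recovered as the remainder mod `n`
  refine ⟨n * n, fun v => e v + n * depth v, ⟨fun v => ?_, fun t => ?_, fun u v huv => ?_⟩⟩
  · have := (e v).2
    have := hdepth_lt v
    nlinarith
  · refine (card_le_one.2 fun a ha b hb => e.injective (Fin.ext ?_)).trans hm
    rw [mem_timeslot] at ha hb
    have hmod : ∀ x, (e x + n * depth x) % n = e x := fun x => by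
      rw [Nat.add_mul_mod_self_left, Nat.mod_eq_of_lt (e x).2]
    rw [← hmod a, ← hmod b, ha, hb]
  · have := (e u).2
    have := hdepth_mono huv
    nlinarith

theorem exists_isTimeSchedule_forall_le_length [IsTrans V prec] [Std.Irrefl prec] (hm : 1 ≤ m) :
    ∃ M f, IsTimeSchedule prec m M f ∧
      ∀ τ : List (Finset V), IsSchedule prec m univ τ → M ≤ τ.length := by
  classical
  have h := exists_isTimeSchedule (prec := prec) hm
  obtain ⟨f, hf⟩ := Nat.find_spec h
  exact ⟨_, f, hf, fun τ hτ => Nat.find_min' h hτ.exists_isTimeSchedule⟩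

theorem IsTimeSchedule.exists_sourcesFirst (hf : IsTimeSchedule prec m M f)
    (hsrc : (sourcesOf prec).ncard ≤ m) :
    ∃ g, IsTimeSchedule prec m M g ∧ SourcesFirst prec g := by
  classical
  have hpos : ∀ v ∉ sourcesOf prec, 0 < f v := fun v hv => by
    simp only [sourcesOf, Set.mem_ofPred_eq, not_forall, not_not] at hv
    obtain ⟨u, hu⟩ := hv
    exact (Nat.zero_le _).trans_lt (hf.lt_of_prec hu)
  let g : V → ℕ := fun v => if v ∈ sourcesOf prec then 0 else f v
  have hg : ∀ v, g v = 0 ↔ v ∈ sourcesOf prec := fun v => by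
    by_cases hv : v ∈ sourcesOf prec <;> simp [g, hv, (hpos v _).ne']
  refine ⟨g, ⟨fun v => ?_, fun t => ?_, fun u v huv => ?_⟩, hg⟩
  · by_cases hv : v ∈ sourcesOf prec <;> simp only [g, hv, if_true, if_false]
    exacts [(Nat.zero_le _).trans_lt (hf.lt_makespan v), hf.lt_makespan v]
  · rcases Nat.eq_zero_or_pos t with rfl | ht
    · have : (↑(timeslot g 0) : Set V) = sourcesOf prec := by
        ext v
        simp [hg]
      rwa [← Set.ncard_coe_finset, this]
    · refine (card_le_card fun v hv => ?_).trans (hf.card_timeslot_le t)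
      rw [mem_timeslot] at hv ⊢
      by_cases hvs : v ∈ sourcesOf prec
      · simp [g, hvs] at hv
        omega
      · simpa [g, hvs] using hv
  · have hv : v ∉ sourcesOf prec := fun hv => hv u huv
    have hgu : g u ≤ f u := by unfold g; split_ifs <;> omega
    simpa [g, hv] using hgu.trans_lt (hf.lt_of_prec huv)

theorem card_timeslot_comp_perm (f : V → ℕ) (e : Equiv.Perm V) (t : ℕ) :
    (timeslot (f ∘ e) t).card = (timeslot f t).card := by
  rw [← card_map e.toEmbedding]
  congr 1
  ext v
  simp [mem_map_equiv]

variable (prec) in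
noncomputable def sinkPotential (f : V → ℕ) : ℕ :=
  ∑ v, (sinksOf prec).indicator f v

theorem IsTimeSchedule.exists_sourcesFirst_maximal (hf : IsTimeSchedule prec m M f)
    (hsrc : (sourcesOf prec).ncard ≤ m) :
    ∃ g, IsTimeSchedule prec m M g ∧ SourcesFirst prec g ∧
      ∀ g', IsTimeSchedule prec m M g' → SourcesFirst prec g' →
        sinkPotential prec g' ≤ sinkPotential prec g := by
  have hbound : ∀ g, IsTimeSchedule prec m M g ∧ SourcesFirst prec g →
      sinkPotential prec g ≤ ∑ _v : V, M := fun g hg =>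
    sum_le_sum fun v _ =>
      Set.indicator_apply_le' (fun _ => (hg.1.lt_makespan v).le) (fun _ => M.zero_le)
  obtain ⟨g, hg, hmax⟩ := exists_max_image_of_bounded _ (hf.exists_sourcesFirst hsrc) hbound
  exact ⟨g, hg.1, hg.2, fun g' h₁ h₂ => hmax g' ⟨h₁, h₂⟩⟩

variable (prec) in
def IsSeparatorSlot (f : V → ℕ) (t : ℕ) : Prop :=
  ∀ v ∉ sinksOf prec, t < f v → ∃ a, f a = t ∧ prec a v

theorem SourcesFirst.isSeparatorSlot_zero [IsTrans V prec] [Std.Irrefl prec]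
    (hfs : SourcesFirst prec f) : IsSeparatorSlot prec f 0 := fun v _ hv => by
  obtain ⟨a, ha, hav⟩ := exists_mem_sourcesOf_prec fun hvs => hv.ne' ((hfs v).2 hvs)
  exact ⟨a, (hfs a).2 ha, hav⟩

variable [DecidableEq V] {s v : V}

theorem IsTimeSchedule.comp_swap (hf : IsTimeSchedule prec m M f) (hs : s ∈ sinksOf prec)
    (hsv : f s < f v) (hpred : ∀ u, prec u v → f u < f s) :
    IsTimeSchedule prec m M (f ∘ Equiv.swap s v) := by
  refine ⟨fun x => hf.lt_makespan _, fun t => ?_, fun x y hxy => ?_⟩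
  · exact (card_timeslot_comp_perm f _ t).trans_le (hf.card_timeslot_le t)
  · have hxs : x ≠ s := fun h => hs y (h ▸ hxy)
    have hfxy := hf.lt_of_prec hxy
    have hgx : f (Equiv.swap s v x) ≤ f x := by
      rw [Equiv.swap_apply_def, if_neg hxs]
      split_ifs with hxv
      exacts [hxv ▸ hsv.le, le_rfl]
    simp only [Function.comp_apply]
    rcases eq_or_ne y s with rfl | hys
    · rw [Equiv.swap_apply_left]
      exact hgx.trans_lt (hfxy.trans hsv)
    rcases eq_or_ne y v with rfl | hyv
    · have hxy' : x ≠ y := fun h => (h ▸ hfxy).false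
      rw [Equiv.swap_apply_right, Equiv.swap_apply_of_ne_of_ne hxs hxy']
      exact hpred x hxy
    · rw [Equiv.swap_apply_of_ne_of_ne hys hyv]
      exact hgx.trans_lt hfxy

theorem sinkPotential_lt_comp_swap (hs : s ∈ sinksOf prec) (hv : v ∉ sinksOf prec)
    (hsv : f s < f v) : sinkPotential prec f < sinkPotential prec (f ∘ Equiv.swap s v) := by
  refine sum_lt_sum (fun x _ => ?_) ⟨s, mem_univ s, by simpa [hs] using hsv⟩
  by_cases hx : x ∈ sinksOf prec
  · have hxv : x ≠ v := fun h => hv (h ▸ hx)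
    simp only [Set.indicator_of_mem hx, Function.comp_apply, Equiv.swap_apply_def, if_neg hxv]
    split_ifs with hxs
    exacts [hxs ▸ hsv.le, le_rfl]
  · simp [Set.indicator_of_notMem hx]

theorem IsTimeSchedule.isSeparatorSlot_of_maximal [IsTrans V prec] (hf : IsTimeSchedule prec m M f)
    (hfs : SourcesFirst prec f)
    (hmax : ∀ g, IsTimeSchedule prec m M g → SourcesFirst prec g →
      sinkPotential prec g ≤ sinkPotential prec f)
    (hs : s ∈ sinksOf prec) (hs0 : f s ≠ 0) : IsSeparatorSlot prec f (f s) := by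
  intro v
  induction hn : f v using Nat.strong_induction_on generalizing v with
  | _ n ih =>
  subst hn
  intro hv hsv
  by_contra! hno
  -- a predecessor of `v` at time `≥ f s` would yield one of `v` in slot `f s`
  have hpred : ∀ u, prec u v → f u < f s := fun u huv => by
    by_contra! hge
    rcases hge.lt_or_eq with hlt | heq
    · obtain ⟨a, ha, hau⟩ :=
        ih (f u) (hf.lt_of_prec huv) u rfl (fun hu => hu v huv) hlt
      exact hno a ha (_root_.trans hau huv)
    · exact hno u heq.symm huv
  exact (sinkPotential_lt_comp_swap hs hv hsv).not_ge
    (hmax _ (hf.comp_swap hs hsv hpred) (hfs.comp_swap hs0 (by omega)))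

end Normalization

def AdmitsProperSeparator (prec : V → V → Prop) (σ : List (Finset V)) : Prop :=
  ∃ (ℓ : ℕ) (S : Fin (ℓ + 1) → Finset V) (seg : Fin (ℓ + 1) → List (Finset V)),
    σ = (List.ofFn fun i : Fin (ℓ + 1) => (S i) :: seg i).flatten ∧
    (↑(S 0) : Set V) = sourcesOf prec ∧
    (∀ i : Fin ℓ, {v : V | ∃ T ∈ seg i.castSucc, v ∈ T} =
      succSet prec ↑(S i.castSucc) \
        (succSet prec ↑(S i.succ) ∪ ↑(S i.succ) ∪ sinksOf prec)) ∧
    (∀ i j : Fin (ℓ + 1), i < j →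
      (↑(S j) : Set V) ⊆ succSet prec ↑(S i) ∪ sinksOf prec) ∧
    {v : V | ∃ T ∈ seg (Fin.last ℓ), v ∈ T} ⊆ sinksOf prec

section Separator

variable [Fintype V] {prec : V → V → Prop} {f : V → ℕ}

theorem setOf_mem_timeslots_eq_succSet_diff {a b : ℕ} (hf : ∀ ⦃u v⦄, prec u v → f u < f v)
    (ha : IsSeparatorSlot prec f a) (hb : IsSeparatorSlot prec f b)
    (hgap : ∀ v ∈ sinksOf prec, a < f v → ¬ f v < b) :
    {v | ∃ T ∈ timeslots f (a + 1) b, v ∈ T} =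
      succSet prec ↑(timeslot f a) \ (succSet prec ↑(timeslot f b) ∪ ↑(timeslot f b) ∪ sinksOf prec) := by
  ext v
  simp only [Set.mem_ofPred_eq, exists_mem_timeslots_iff, succSet, Set.mem_sdiff, Set.mem_union,
    mem_coe, mem_timeslot, not_or, not_exists, not_and]
  constructor
  · rintro ⟨hlo, hhi⟩
    have hv : v ∉ sinksOf prec := fun hv => hgap v hv hlo hhi
    refine ⟨ha v hv hlo, ⟨fun c hc hcv => ?_, hhi.ne⟩, hv⟩
    exact (hc ▸ hf hcv).asymm hhi
  · rintro ⟨⟨c, hc, hcv⟩, ⟨hnsucc, hne⟩, hv⟩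
    refine ⟨hc ▸ hf hcv, lt_of_le_of_ne (not_lt.1 fun hlt => ?_) hne⟩
    obtain ⟨d, hd, hdv⟩ := hb v hv hlt
    exact hnsucc d hd hdv

theorem admitsProperSeparator_timeslots {ℓ : ℕ} (q : Fin (ℓ + 2) → ℕ)
    (hf : ∀ ⦃u v⦄, prec u v → f u < f v) (hfs : SourcesFirst prec f)
    (hq : StrictMono q) (hq0 : q 0 = 0)
    (hsep : ∀ i : Fin (ℓ + 1), IsSeparatorSlot prec f (q i.castSucc))
    (hsink : ∀ v ∈ sinksOf prec, f v ≤ q (Fin.last ℓ).castSucc → f v ∈ Set.range q)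
    (htail : ∀ v, q (Fin.last ℓ).castSucc < f v → v ∈ sinksOf prec) :
    AdmitsProperSeparator prec (timeslots f 0 (q (Fin.last _))) := by
  have hS : ∀ i v, v ∈ (↑(timeslot f (q i)) : Set V) ↔ f v = q i := by simp
  have hseg : ∀ (i : Fin (ℓ + 1)) v,
      v ∈ {v | ∃ T ∈ timeslots f (q i.castSucc + 1) (q i.succ), v ∈ T} ↔
        q i.castSucc < f v ∧ f v < q i.succ := fun i v => exists_mem_timeslots_iff
  refine ⟨ℓ, fun i => timeslot f (q i.castSucc),
    fun i => timeslots f (q i.castSucc + 1) (q i.succ),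
    ?_, ?_, fun i => ?_, fun i j hij v hv => ?_, fun v hv => ?_⟩
  · have hcons : (fun i : Fin (ℓ + 1) =>
        timeslot f (q i.castSucc) :: timeslots f (q i.castSucc + 1) (q i.succ)) =
          fun i => timeslots f (q i.castSucc) (q i.succ) :=
      funext fun i => (timeslots_eq_cons f (hq Fin.castSucc_lt_succ)).symm
    rw [hcons, flatten_ofFn_timeslots f q hq.monotone, hq0]
  · ext v
    rw [hS, Fin.castSucc_zero, hq0, hfs v]
  · dsimp only
    rw [Fin.succ_castSucc]
    refine setOf_mem_timeslots_eq_succSet_diff hf (hsep _) (hsep _) fun v hv hlo hhi => ?_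
    obtain ⟨k, hk⟩ := hsink v hv (hhi.le.trans (hq.monotone (Fin.castSucc_le_castSucc_iff.2
      (Fin.le_last _))))
    rw [← hk, hq.lt_iff_lt, Fin.castSucc_lt_iff_succ_le, Fin.succ_castSucc] at hlo
    rw [← hk, hq.lt_iff_lt] at hhi
    exact hlo.not_gt hhi
  · rw [hS] at hv
    by_cases hvs : v ∈ sinksOf prec
    · exact Or.inr hvs
    · obtain ⟨a, ha, hav⟩ := hsep i v hvs (hv ▸ hq (Fin.castSucc_lt_castSucc_iff.2 hij))
      exact Or.inl ⟨a, (hS _ a).2 ha, hav⟩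
  · exact htail v ((hseg _ v).1 hv).1

end Separator

theorem exists_strictMono_enum (P : Finset ℕ) {L M : ℕ} (h0 : 0 ∈ P) (hL : L ∈ P)
    (hPL : ∀ t ∈ P, t ≤ L) (hLM : L < M) :
    ∃ (ℓ : ℕ) (q : Fin (ℓ + 2) → ℕ), StrictMono q ∧ q 0 = 0 ∧ q (Fin.last _) = M ∧
      q (Fin.last ℓ).castSucc = L ∧ (∀ i : Fin (ℓ + 1), q i.castSucc ∈ P) ∧
      ∀ t ∈ P, t ∈ Set.range q := by
  have hM : M ∉ P := fun h => (hPL M h).not_gt hLM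
  have hcard : (insert M P).card = P.card - 1 + 2 := by
    rw [card_insert_of_notMem hM]
    have := card_pos.2 ⟨0, h0⟩
    omega
  set q := (insert M P).orderEmbOfFin hcard
  have hrange : Set.range q = ↑(insert M P) := range_orderEmbOfFin _ _
  have hmem : ∀ t ∈ insert M P, ∃ i, q i = t := fun t ht => by
    rw [← mem_coe, ← hrange] at ht
    exact ht
  have hqM : q (Fin.last _) = M := by
    obtain ⟨j, hj⟩ := hmem M (mem_insert_self M P)
    refine le_antisymm ?_ (hj ▸ q.monotone (Fin.le_last j))
    rcases mem_insert.1 (orderEmbOfFin_mem _ hcard (Fin.last _)) with h | h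
    exacts [h.le, (hPL _ h).trans hLM.le]
  have hqP : ∀ i : Fin (P.card - 1 + 1), q i.castSucc ∈ P := fun i =>
    (mem_insert.1 (orderEmbOfFin_mem _ hcard _)).resolve_left
      (hqM ▸ q.strictMono (Fin.castSucc_lt_last i)).ne
  refine ⟨P.card - 1, q, q.strictMono, ?_, hqM, ?_, hqP,
    fun t ht => hmem t (mem_insert_of_mem ht)⟩
  · obtain ⟨j, hj⟩ := hmem 0 (mem_insert_of_mem h0)
    exact Nat.eq_zero_of_le_zero (hj ▸ q.monotone (Fin.zero_le j))
  · obtain ⟨j, hj⟩ := hmem L (mem_insert_of_mem hL)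
    refine le_antisymm (hPL _ (hqP _)) ?_
    rcases Fin.eq_castSucc_or_eq_last j with ⟨k, rfl⟩ | rfl
    · exact hj ▸ q.monotone (Fin.castSucc_le_castSucc_iff.2 (Fin.le_last k))
    · exact absurd (hj.symm.trans hqM) hLM.ne

theorem IsTimeSchedule.admitsProperSeparator [Fintype V] [Nonempty V] {prec : V → V → Prop}
    [IsTrans V prec] [Std.Irrefl prec] {m M : ℕ} {f : V → ℕ} (hf : IsTimeSchedule prec m M f)
    (hfs : SourcesFirst prec f)
    (hsep : ∀ s ∈ sinksOf prec, f s ≠ 0 → IsSeparatorSlot prec f (f s)) :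
    AdmitsProperSeparator prec (timeslots f 0 M) := by
  classical
  set L := (univ.filter (· ∉ sinksOf prec)).sup f
  have hL : ∀ v ∉ sinksOf prec, f v ≤ L := fun v hv =>
    le_sup (mem_filter.2 ⟨mem_univ v, hv⟩)
  have hLM : L < M := (Finset.sup_lt_iff ((Nat.zero_le _).trans_lt
    (hf.lt_makespan (Classical.arbitrary V)))).2 fun v _ => hf.lt_makespan v
  set P := insert 0 (insert L (((univ.filter (· ∈ sinksOf prec)).image f).filter (· ≤ L)))
  have hPsep : ∀ t ∈ P, IsSeparatorSlot prec f t := by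
    intro t ht
    simp only [P, mem_insert, mem_filter, mem_image, mem_univ, true_and] at ht
    rcases ht with rfl | rfl | ⟨⟨s, hs, rfl⟩, -⟩
    · exact hfs.isSeparatorSlot_zero
    · exact fun v hv hlt => absurd (hL v hv) hlt.not_ge
    · by_cases hs0 : f s = 0
      · exact hs0 ▸ hfs.isSeparatorSlot_zero
      · exact hsep s hs hs0
  have hPL : ∀ t ∈ P, t ≤ L := by
    intro t ht
    simp only [P, mem_insert, mem_filter] at ht
    rcases ht with rfl | rfl | ⟨-, h⟩
    exacts [Nat.zero_le _, le_rfl, h]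
  obtain ⟨ℓ, q, hq, hq0, hqM, hqL, hqP, hPq⟩ :=
    exists_strictMono_enum P (by simp [P]) (by simp [P]) hPL hLM
  rw [← hqM]
  refine admitsProperSeparator_timeslots q hf.lt_of_prec hfs hq hq0 (fun i => hPsep _ (hqP i))
    (fun v hv hle => hPq _ ?_) fun v hlt => by_contra fun hv => (hL v hv).not_gt (hqL ▸ hlt)
  simp only [P, mem_insert, mem_filter, mem_image, mem_univ, true_and]
  exact Or.inr (Or.inr ⟨⟨v, hv, rfl⟩, hqL ▸ hle⟩)

end

/-- For every finite DAG with at most `m` sources there exists a feasible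
`m`-machine schedule of minimum makespan admitting a proper separator
`σ = S₀ ⊕ σ₀ ⊕ S₁ ⊕ σ₁ ⊕ … ⊕ S_ℓ ⊕ σ_ℓ` with `S₀` the set of sources and
properties (A), (B), (C). -/
theorem stmt9 {V : Type*} [Fintype V] [DecidableEq V] [Nonempty V]
    (prec : V → V → Prop) (htrans : Transitive prec) (hirr : Irreflexive prec)
    (m : ℕ) (hsrc : {v : V | ∀ u, ¬ prec u v}.ncard ≤ m) :
    ∃ σ : List (Finset V), IsSchedule prec m Finset.univ σ ∧
      (∀ τ : List (Finset V), IsSchedule prec m Finset.univ τ → σ.length ≤ τ.length) ∧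
      ∃ (ℓ : ℕ) (S : Fin (ℓ + 1) → Finset V) (seg : Fin (ℓ + 1) → List (Finset V)),
        σ = (List.ofFn fun i : Fin (ℓ + 1) => (S i) :: seg i).flatten ∧
        (↑(S 0) : Set V) = {v : V | ∀ u, ¬ prec u v} ∧
        (∀ i : Fin ℓ, {v : V | ∃ T ∈ seg i.castSucc, v ∈ T} =
          succSet prec ↑(S i.castSucc) \
            (succSet prec ↑(S i.succ) ∪ ↑(S i.succ) ∪ sinksOf prec)) ∧
        (∀ i j : Fin (ℓ + 1), i < j →
          (↑(S j) : Set V) ⊆ succSet prec ↑(S i) ∪ sinksOf prec) ∧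
        {v : V | ∃ T ∈ seg (Fin.last ℓ), v ∈ T} ⊆ sinksOf prec := by
  have : IsTrans V prec := ⟨htrans⟩
  have : Std.Irrefl prec := ⟨hirr⟩
  have hm : 1 ≤ m := ((Set.ncard_pos (Set.toFinite _)).2 sourcesOf_nonempty).trans_le hsrc
  obtain ⟨M, f₀, hf₀, hopt⟩ := exists_isTimeSchedule_forall_le_length (prec := prec) hm
  obtain ⟨f, hf, hfs, hmax⟩ := hf₀.exists_sourcesFirst_maximal hsrc
  refine ⟨timeslots f 0 M, hf.isSchedule, fun τ hτ => by simpa using hopt τ hτ,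
    hf.admitsProperSeparator hfs fun s hs hs0 => hf.isSeparatorSlot_of_maximal hfs hmax hs hs0⟩
end

section
/- Let G be a finite DAG whose set of sinks has size at most m. Then the minimum makespan of a feasible m-machine schedule of G equals 1 plus the minimum makespan of a feasible m-machine schedule of the induced subgraph G \ sinks(G) obtained by deleting all sinks (with the convention that the empty graph has makespan 0). -/
/-- A finite nonempty set has a maximal element w.r.t. a transitive
irreflexive relation. -/
lemma my_exists_maximal {V : Type*} [Fintype V] (prec : V → V → Prop)
    (htrans : Transitive prec) (hirr : Irreflexive prec)
    (X : Finset V) (hX : X.Nonempty) : ∃ v ∈ X, ∀ u ∈ X, ¬ prec v u := by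
  haveI : IsTrans V (flip prec) := ⟨fun a b c h1 h2 => htrans h2 h1⟩
  haveI : IsIrrefl V (flip prec) := ⟨hirr⟩
  obtain ⟨v, hv, hmin⟩ :=
    (Finite.wellFounded_of_trans_of_irrefl (flip prec)).has_min X hX
  exact ⟨v, hv, fun u hu h => hmin u hu h⟩

/-- Appending a final slot of maximal jobs to a schedule. -/
lemma my_schedule_append {V : Type*} [DecidableEq V] (prec : V → V → Prop) (m : ℕ)
    (X : Finset V) (σ : List (Finset V)) (hσ : IsSchedule prec m X σ)
    (T : Finset V) (hc : T.card ≤ m) (hd : Disjoint T X)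
    (hmax : ∀ v ∈ T, ∀ u, (u ∈ X ∨ u ∈ T) → ¬ prec v u) :
    IsSchedule prec m (X ∪ T) (σ ++ [T]) := by
  obtain ⟨h1, h2, h3, h4⟩ := hσ
  have hlen : (σ ++ [T]).length = σ.length + 1 := by simp
  have hget : ∀ i : Fin (σ ++ [T]).length,
      ((σ ++ [T]).get i = T ∧ (i : ℕ) = σ.length) ∨
      ∃ h : (i : ℕ) < σ.length, (σ ++ [T]).get i = σ.get ⟨i, h⟩ := by
    intro i
    have hi : (i : ℕ) < σ.length + 1 := by simpa using i.2
    by_cases h : (i : ℕ) < σ.length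
    · right
      refine ⟨h, ?_⟩
      simp [List.get_eq_getElem, List.getElem_append, h]
    · left
      have hieq : (i : ℕ) = σ.length := by omega
      constructor
      · simp [List.get_eq_getElem, List.getElem_append, h, hieq]
      · exact hieq
  refine ⟨?_, ?_, ?_, ?_⟩
  · intro S hS
    rcases List.mem_append.1 hS with h | h
    · exact h1 S h
    · simp at h; subst h; exact hc
  · intro v
    constructor
    · intro hv
      rcases Finset.mem_union.1 hv with hv | hv
      · obtain ⟨i, hi⟩ := (h2 v).1 hv
        refine ⟨⟨i, by rw [hlen]; exact Nat.lt_succ_of_lt i.2⟩, ?_⟩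
        rcases hget ⟨i, by rw [hlen]; exact Nat.lt_succ_of_lt i.2⟩ with
          ⟨hT, hidx⟩ | ⟨h, heq⟩
        · exfalso; simp at hidx; have := i.2; omega
        · rw [heq]; exact hi
      · refine ⟨⟨σ.length, by rw [hlen]; omega⟩, ?_⟩
        rcases hget ⟨σ.length, by rw [hlen]; omega⟩ with ⟨hT, _⟩ | ⟨h, _⟩
        · rw [hT]; exact hv
        · simp at h
    · rintro ⟨i, hi⟩
      rcases hget i with ⟨hT, _⟩ | ⟨h, heq⟩
      · rw [hT] at hi; exact Finset.mem_union.2 (Or.inr hi)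
      · rw [heq] at hi
        exact Finset.mem_union.2 (Or.inl ((h2 v).2 ⟨_, hi⟩))
  · intro i j hij
    rcases hget i with ⟨hTi, hidxi⟩ | ⟨hi', heqi⟩ <;>
      rcases hget j with ⟨hTj, hidxj⟩ | ⟨hj', heqj⟩
    · exact absurd (Fin.ext (hidxi.trans hidxj.symm)) hij
    · rw [hTi, heqj]
      exact hd.mono_right (fun v hv => (h2 v).2 ⟨_, hv⟩)
    · rw [heqi, hTj]
      exact (hd.mono_right (fun v hv => (h2 v).2 ⟨_, hv⟩)).symm
    · rw [heqi, heqj]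
      exact h3 _ _ (by simp [Fin.ext_iff]; exact fun h => hij (Fin.ext h))
  · intro i j hu' hui v hv hprec
    rcases hget i with ⟨hTi, hidxi⟩ | ⟨hi', heqi⟩
    · exfalso
      rw [hTi] at hui
      rcases hget j with ⟨hTj, _⟩ | ⟨hj', heqj⟩
      · rw [hTj] at hv
        exact hmax hu' hui v (Or.inr hv) hprec
      · rw [heqj] at hv
        exact hmax hu' hui v (Or.inl ((h2 v).2 ⟨_, hv⟩)) hprec
    · rcases hget j with ⟨hTj, hidxj⟩ | ⟨hj', heqj⟩
      · omega
      · rw [heqi] at hui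
        rw [heqj] at hv
        exact h4 ⟨i, hi'⟩ ⟨j, hj'⟩ hu' hui v hv hprec

/-- Every finite job set has some feasible schedule when `m ≥ 1`. -/
lemma my_exists_schedule {V : Type*} [Fintype V] [DecidableEq V]
    (prec : V → V → Prop) (htrans : Transitive prec) (hirr : Irreflexive prec)
    (m : ℕ) (hm : 1 ≤ m) (X : Finset V) : ∃ σ, IsSchedule prec m X σ := by
  induction X using Finset.strongInduction with
  | _ X ih =>
    rcases X.eq_empty_or_nonempty with rfl | hX
    · refine ⟨[], ?_⟩
      refine ⟨by simp, ?_, by simp, by simp⟩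
      intro v
      simp only [Finset.notMem_empty, false_iff]
      rintro ⟨i, -⟩
      exact absurd i.2 (by simp)
    · obtain ⟨v, hv, hmax⟩ := my_exists_maximal prec htrans hirr X hX
      obtain ⟨σ, hσ⟩ := ih (X.erase v) (Finset.erase_ssubset hv)
      refine ⟨σ ++ [{v}], ?_⟩
      have := my_schedule_append prec m (X.erase v) σ hσ {v}
        (by simpa using hm)
        (by simp)
        (by
          intro w hw u hu
          simp only [Finset.mem_singleton] at hw
          rcases hu with hu | hu
          · rw [hw]; exact hmax u (Finset.mem_of_mem_erase hu)
          · simp only [Finset.mem_singleton] at hu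
            rw [hw, hu]; exact hirr v)
      have hXeq : X.erase v ∪ {v} = X := by
        ext w
        simp only [Finset.mem_union, Finset.mem_erase, Finset.mem_singleton]
        constructor
        · rintro (⟨-, h⟩ | rfl) <;> [exact h; exact hv]
        · intro h
          by_cases hwv : w = v
          · exact Or.inr hwv
          · exact Or.inl ⟨hwv, h⟩
      rwa [hXeq] at this

/-- Dropping the last slot of a schedule restricts to the jobs that must
occur earlier. -/
lemma my_schedule_dropLast {V : Type*} [DecidableEq V] (prec : V → V → Prop)
    (m : ℕ) (X S : Finset V) (σ : List (Finset V)) (hσ : IsSchedule prec m X σ)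
    (hS : ∀ v ∈ X \ S, ∃ u ∈ X, prec v u) :
    IsSchedule prec m (X \ S) (σ.dropLast.map (fun T => T ∩ (X \ S))) := by
  obtain ⟨h1, h2, h3, h4⟩ := hσ
  have hlen : (σ.dropLast.map (fun T => T ∩ (X \ S))).length = σ.length - 1 := by
    simp
  have hget : ∀ i : Fin (σ.dropLast.map (fun T => T ∩ (X \ S))).length,
      ∃ h : (i : ℕ) < σ.length,
        (σ.dropLast.map (fun T => T ∩ (X \ S))).get i = σ.get ⟨i, h⟩ ∩ (X \ S) := by
    intro i
    have hi : (i : ℕ) < σ.length - 1 := by simpa using i.2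
    refine ⟨by omega, ?_⟩
    simp [List.get_eq_getElem, List.getElem_dropLast]
  refine ⟨?_, ?_, ?_, ?_⟩
  · intro T hT
    simp only [List.mem_map] at hT
    obtain ⟨U, hU, rfl⟩ := hT
    exact le_trans (Finset.card_le_card (Finset.inter_subset_left))
      (h1 U (List.mem_of_mem_dropLast hU))
  · intro v
    constructor
    · intro hv
      obtain ⟨i, hi⟩ := (h2 v).1 (Finset.mem_sdiff.1 hv).1
      obtain ⟨u, hu, hprec⟩ := hS v hv
      obtain ⟨j, hj⟩ := (h2 u).1 hu
      have hij : (i : ℕ) < (j : ℕ) := h4 i j v hi u hj hprec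
      have hilt : (i : ℕ) < σ.length - 1 := by have := j.2; omega
      refine ⟨⟨i, by rw [hlen]; exact hilt⟩, ?_⟩
      obtain ⟨h, heq⟩ := hget ⟨i, by rw [hlen]; exact hilt⟩
      rw [heq]
      exact Finset.mem_inter.2 ⟨by convert hi using 2, hv⟩
    · rintro ⟨i, hi⟩
      obtain ⟨h, heq⟩ := hget i
      rw [heq] at hi
      exact (Finset.mem_inter.1 hi).2
  · intro i j hij
    obtain ⟨hi', heqi⟩ := hget i
    obtain ⟨hj', heqj⟩ := hget j
    rw [heqi, heqj]
    refine Disjoint.mono Finset.inter_subset_left Finset.inter_subset_left ?_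
    exact h3 ⟨i, hi'⟩ ⟨j, hj'⟩ (by simp [Fin.ext_iff]; exact fun h => hij (Fin.ext h))
  · intro i j u hu v hv hprec
    obtain ⟨hi', heqi⟩ := hget i
    obtain ⟨hj', heqj⟩ := hget j
    rw [heqi] at hu
    rw [heqj] at hv
    exact h4 ⟨i, hi'⟩ ⟨j, hj'⟩ u (Finset.mem_inter.1 hu).1 v
      (Finset.mem_inter.1 hv).1 hprec

/-- If a finite nonempty DAG has at most `m` sinks, then its minimum makespan
on `m` machines equals `1` plus the minimum makespan of the DAG obtained by
deleting all sinks (the empty graph having makespan `0`). -/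
theorem stmt10 {V : Type*} [Fintype V] [DecidableEq V] [Nonempty V]
    (prec : V → V → Prop) [DecidableRel prec]
    (htrans : Transitive prec) (hirr : Irreflexive prec) (m : ℕ)
    (hm : (Finset.univ.filter fun v : V => ∀ u, ¬ prec v u).card ≤ m) :
    sInf {M : ℕ | ∃ σ : List (Finset V),
        IsSchedule prec m Finset.univ σ ∧ σ.length = M} =
    sInf {M : ℕ | ∃ σ : List (Finset V),
        IsSchedule prec m
          (Finset.univ \ (Finset.univ.filter fun v : V => ∀ u, ¬ prec v u)) σ ∧
        σ.length = M} + 1 := by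
  set S : Finset V := Finset.univ.filter fun v : V => ∀ u, ¬ prec v u with hSdef
  set X' : Finset V := Finset.univ \ S with hX'def
  -- sinks are nonempty, hence m ≥ 1
  have hSne : S.Nonempty := by
    obtain ⟨v, -, hv⟩ := my_exists_maximal prec htrans hirr Finset.univ
      Finset.univ_nonempty
    exact ⟨v, by simp [hSdef]; exact fun u => hv u (Finset.mem_univ u)⟩
  have hm1 : 1 ≤ m := le_trans (Finset.card_pos.2 hSne) hm
  set A : Set ℕ := {M : ℕ | ∃ σ : List (Finset V),
      IsSchedule prec m Finset.univ σ ∧ σ.length = M} with hAdef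
  set B : Set ℕ := {M : ℕ | ∃ σ : List (Finset V),
      IsSchedule prec m X' σ ∧ σ.length = M} with hBdef
  -- from any schedule of X', get one of univ one longer
  have hBtoA : ∀ b ∈ B, b + 1 ∈ A := by
    rintro b ⟨σ, hσ, rfl⟩
    refine ⟨σ ++ [S], ?_, by simp⟩
    have := my_schedule_append prec m X' σ hσ S hm
      (by simp [hX'def, Finset.disjoint_sdiff])
      (by
        intro w hw u _
        simp [hSdef] at hw
        exact hw u)
    rwa [hX'def, Finset.sdiff_union_of_subset (Finset.subset_univ S)] at this
  have hBne : B.Nonempty := by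
    obtain ⟨σ, hσ⟩ := my_exists_schedule prec htrans hirr m hm1 X'
    exact ⟨σ.length, σ, hσ, rfl⟩
  have hAne : A.Nonempty := by
    obtain ⟨b, hb⟩ := hBne
    exact ⟨b + 1, hBtoA b hb⟩
  -- sInf A ≥ 1
  have hA1 : 1 ≤ sInf A := by
    obtain ⟨σ, hσ, hlen⟩ := Nat.sInf_mem hAne
    rcases Nat.eq_zero_or_pos (sInf A) with h0 | h
    · exfalso
      rw [h0] at hlen
      have hσnil : σ = [] := List.length_eq_zero_iff.1 hlen
      obtain ⟨i, -⟩ := (hσ.2.1 (Classical.arbitrary V)).1 (Finset.mem_univ _)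
      exact absurd i.2 (by simp [hσnil])
    · exact h
  have le1 : sInf A ≤ sInf B + 1 := Nat.sInf_le (hBtoA _ (Nat.sInf_mem hBne))
  have le2 : sInf B + 1 ≤ sInf A := by
    obtain ⟨σ, hσ, hlen⟩ := Nat.sInf_mem hAne
    have hdrop := my_schedule_dropLast prec m Finset.univ S σ hσ
      (by
        intro v hv
        simp [hSdef] at hv
        obtain ⟨u, hu⟩ := hv
        exact ⟨u, Finset.mem_univ u, hu⟩)
    have hmem : σ.length - 1 ∈ B := by
      refine ⟨_, hdrop, ?_⟩
      simp
    have := Nat.sInf_le hmem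
    omega
  omega
end

section
/- Let G be a finite DAG on vertex set V, let U = V \ sinks(G), and for X ⊆ U, i ∈ ℕ, t ∈ ℕ define f(i,t,X) to hold iff X is downward closed in U (X = pred[X] ∩ U, equivalently every non-sink predecessor of a member of X is in X) and there exists a feasible m-machine schedule with t timeslots processing exactly the jobs of X together with exactly i sinks of G. Then for t ≥ 1, f(i,t,X) holds if and only if X = pred[X] ∩ U and there exist j ∈ {0,…,m} and Y ⊆ X such that: Y is an antichain with |Y| ≤ m − j; the number of sinks all of whose predecessors lie in X \ Y is at least i; and f(i−j, t−1, X \ Y) holds. -/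
/-- The sinks of the DAG, as a finset. -/
def sinksF {V : Type*} [Fintype V] [DecidableEq V]
    (prec : V → V → Prop) [DecidableRel prec] : Finset V :=
  Finset.univ.filter fun v => ∀ u, ¬ prec v u

/-- A feasible schedule of `X` that moreover schedules, for every scheduled
job, all of its predecessors (predecessor-closedness of the job set). -/
def IsSchedClosed {V : Type*} (prec : V → V → Prop) (m : ℕ)
    (X : Finset V) (σ : List (Finset V)) : Prop :=
  IsSchedule prec m X σ ∧ ∀ v ∈ X, ∀ u, prec u v → u ∈ X

/-- `fval prec m i t X` : `X` is downward closed among non-sinks and there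
is a feasible `m`-machine schedule with `t` timeslots processing exactly the
jobs of `X` together with exactly `i` sinks of `G`. -/
def fval {V : Type*} [Fintype V] [DecidableEq V]
    (prec : V → V → Prop) [DecidableRel prec] (m i t : ℕ) (X : Finset V) : Prop :=
  (∀ v ∈ X, ∀ u, prec u v → u ∉ sinksF prec → u ∈ X) ∧
  ∃ K ⊆ sinksF prec, K.card = i ∧
    ∃ σ : List (Finset V), IsSchedClosed prec m (X ∪ K) σ ∧ σ.length = t

section
variable {V : Type*} {prec : V → V → Prop} {m : ℕ}

theorem isSchedule_iff_pairwise {X : Finset V} {σ : List (Finset V)} :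
    IsSchedule prec m X σ ↔
      (∀ T ∈ σ, T.card ≤ m) ∧ (∀ v, v ∈ X ↔ ∃ T ∈ σ, v ∈ T) ∧
      (∀ T ∈ σ, ∀ u ∈ T, ∀ v ∈ T, ¬ prec u v) ∧
      σ.Pairwise (fun A B => Disjoint A B ∧ ∀ u ∈ B, ∀ v ∈ A, ¬ prec u v) := by
  have hcover : ∀ v, (∃ i : Fin σ.length, v ∈ σ.get i) ↔ ∃ T ∈ σ, v ∈ T := fun v =>
    ⟨fun ⟨i, hi⟩ => ⟨_, σ.get_mem i, hi⟩,
     fun ⟨T, hT, hv⟩ => by obtain ⟨i, rfl⟩ := List.mem_iff_get.1 hT; exact ⟨i, hv⟩⟩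
  simp only [IsSchedule, hcover, List.pairwise_iff_get, and_congr_right_iff]
  intro _ _
  constructor
  · rintro ⟨hdisj, hprec⟩
    refine ⟨fun T hT u hu v hv huv => ?_, fun i j hij => ⟨hdisj i j hij.ne, ?_⟩⟩
    · obtain ⟨i, rfl⟩ := List.mem_iff_get.1 hT
      exact lt_irrefl _ (hprec i i u hu v hv huv)
    · exact fun u hu v hv huv => lt_asymm hij (hprec j i u hu v hv huv)
  · rintro ⟨hslot, hpair⟩
    refine ⟨fun i j hij => ?_, fun i j u hu v hv huv => ?_⟩
    · rcases lt_or_gt_of_ne hij with h | h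
      exacts [(hpair i j h).1, (hpair j i h).1.symm]
    · rcases lt_trichotomy i j with h | rfl | h
      · exact h
      · exact absurd huv (hslot _ (σ.get_mem i) u hu v hv)
      · exact absurd huv ((hpair j i h).2 u hu v hv)

theorem isSchedule_append_singleton_iff [DecidableEq V] {S T : Finset V} {σ : List (Finset V)} :
    IsSchedule prec m S (σ ++ [T]) ↔
      T ⊆ S ∧ T.card ≤ m ∧ (∀ u ∈ T, ∀ v ∈ S, ¬ prec u v) ∧
        IsSchedule prec m (S \ T) σ := by
  simp only [isSchedule_iff_pairwise, List.pairwise_append, List.pairwise_singleton,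
    List.mem_append, List.mem_cons, List.not_mem_nil, or_false, or_imp, forall_and,
    forall_eq, exists_or_eq_imp, true_and]
  constructor
  · rintro ⟨⟨hcard, hTm⟩, hcover, ⟨hslot, hTT⟩, hpair, hdisjT, hlastT⟩
    have hTS : T ⊆ S := fun v hv => (hcover v).2 (Or.inr hv)
    refine ⟨hTS, hTm, fun u hu v hv => ?_, hcard, fun v => ?_, hslot, hpair⟩
    · rcases (hcover v).1 hv with ⟨A, hA, hvA⟩ | hvT
      exacts [hlastT A hA u hu v hvA, hTT u hu v hvT]
    · rw [Finset.mem_sdiff, hcover]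
      constructor
      · rintro ⟨h | h, hvT⟩
        exacts [h, absurd h hvT]
      · rintro ⟨A, hA, hvA⟩
        exact ⟨Or.inl ⟨A, hA, hvA⟩, Finset.disjoint_left.1 (hdisjT A hA) hvA⟩
  · rintro ⟨hTS, hTm, hlast, hcard, hcover, hslot, hpair⟩
    have hcover' : ∀ A ∈ σ, A ⊆ S \ T := fun A hA v hv => (hcover v).2 ⟨A, hA, hv⟩
    refine ⟨⟨hcard, hTm⟩, fun v => ?_, ⟨hslot, fun u hu v hv => hlast u hu v (hTS hv)⟩, hpair,
      fun A hA => Finset.disjoint_of_subset_left (hcover' A hA) Finset.sdiff_disjoint,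
      fun A hA u hu v hv => hlast u hu v (Finset.sdiff_subset (hcover' A hA hv))⟩
    by_cases hvT : v ∈ T
    · simp [hvT, hTS hvT]
    · simp only [hvT, or_false, ← hcover, Finset.mem_sdiff, not_false_eq_true, and_true]

end

def readySinks {V : Type*} [Fintype V] [DecidableEq V] (prec : V → V → Prop) [DecidableRel prec]
    (X : Finset V) : Finset V :=
  (sinksF prec).filter fun s => ∀ u, prec u s → u ∈ X

section
variable {V : Type*} [Fintype V] [DecidableEq V] {prec : V → V → Prop} [DecidableRel prec]

theorem mem_readySinks {X : Finset V} {s : V} :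
    s ∈ readySinks prec X ↔ s ∈ sinksF prec ∧ ∀ u, prec u s → u ∈ X :=
  Finset.mem_filter

theorem readySinks_subset_sinksF (X : Finset V) : readySinks prec X ⊆ sinksF prec :=
  Finset.filter_subset _ _

theorem readySinks_mono {X X' : Finset V} (h : X ⊆ X') :
    readySinks prec X ⊆ readySinks prec X' := fun _ hs =>
  mem_readySinks.2 ⟨(mem_readySinks.1 hs).1, fun u hu => h ((mem_readySinks.1 hs).2 u hu)⟩

theorem not_prec_of_mem_sinksF {u v : V} (hu : u ∈ sinksF prec) : ¬ prec u v :=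
  (Finset.mem_filter.1 hu).2 v

theorem not_mem_sinksF_of_prec {u v : V} (h : prec u v) : u ∉ sinksF prec :=
  fun hu => not_prec_of_mem_sinksF hu h

theorem predClosed_union_iff {X K : Finset V}
    (hX : ∀ v ∈ X, ∀ u, prec u v → u ∉ sinksF prec → u ∈ X) (hK : K ⊆ sinksF prec) :
    (∀ v ∈ X ∪ K, ∀ u, prec u v → u ∈ X ∪ K) ↔ K ⊆ readySinks prec X := by
  constructor
  · intro h s hs
    refine mem_readySinks.2 ⟨hK hs, fun u hu => ?_⟩
    rcases Finset.mem_union.1 (h s (Finset.mem_union_right _ hs) u hu) with huX | huK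
    exacts [huX, absurd (hK huK) (not_mem_sinksF_of_prec hu)]
  · intro h v hv u hu
    refine Finset.mem_union_left _ ?_
    rcases Finset.mem_union.1 hv with hvX | hvK
    exacts [hX v hvX u hu (not_mem_sinksF_of_prec hu), (mem_readySinks.1 (h hvK)).2 u hu]

variable {m i t : ℕ} {X : Finset V}

theorem exists_lastSlot_of_fval_succ (hXU : ∀ v ∈ X, v ∉ sinksF prec)
    (h : fval prec m i (t + 1) X) :
    ∃ j ≤ m, ∃ Y ⊆ X, (∀ a ∈ Y, ∀ b ∈ Y, ¬ prec a b) ∧ Y.card ≤ m - j ∧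
      i ≤ (readySinks prec (X \ Y)).card ∧ fval prec m (i - j) t (X \ Y) := by
  obtain ⟨hX, K, hK, rfl, σ, ⟨hσ, hcl⟩, hlen⟩ := h
  obtain ⟨σ, T, rfl⟩ : ∃ σ' T, σ = σ' ++ [T] :=
    σ.eq_nil_or_concat'.resolve_left (by rintro rfl; simp at hlen)
  obtain ⟨hTS, hTm, hlast, hσ⟩ := isSchedule_append_singleton_iff.1 hσ
  have hXK : Disjoint X K := Finset.disjoint_left.2 fun v hv hvK => hXU v hv (hK hvK)
  have hsplit : (T ∩ X).card + (T ∩ K).card = T.card := by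
    rw [← Finset.card_union_of_disjoint (hXK.mono Finset.inter_subset_right
      Finset.inter_subset_right), ← Finset.inter_union_distrib_left, Finset.inter_eq_left.2 hTS]
  have hrest : (X ∪ K) \ T = X \ (T ∩ X) ∪ K \ T := by
    ext v; simp only [Finset.mem_union, Finset.mem_sdiff, Finset.mem_inter]; tauto
  have hnotT : ∀ v ∈ X ∪ K, ∀ u, prec u v → u ∉ T := fun v hv u huv huT => hlast u huT v hv huv
  refine ⟨(T ∩ K).card, by omega, T ∩ X, Finset.inter_subset_right,
    fun a ha b hb => hlast a (Finset.mem_inter.1 ha).1 b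
      (Finset.mem_union_left _ (Finset.mem_inter.1 hb).2), by omega,
    Finset.card_le_card fun s hs => ?_, ?_, K \ T, Finset.sdiff_subset.trans hK,
    Finset.card_sdiff, σ, ⟨hrest ▸ hσ, ?_⟩, by simpa using hlen⟩
  · have hs' := mem_readySinks.1 ((predClosed_union_iff hX hK).1 hcl hs)
    exact mem_readySinks.2 ⟨hs'.1, fun u hu => Finset.mem_sdiff.2 ⟨hs'.2 u hu,
      fun huT => hnotT s (Finset.mem_union_right _ hs) u hu (Finset.mem_inter.1 huT).1⟩⟩
  · intro v hv u huv hu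
    have hvX := (Finset.mem_sdiff.1 hv).1
    exact Finset.mem_sdiff.2 ⟨hX v hvX u huv hu,
      fun huT => hnotT v (Finset.mem_union_left _ hvX) u huv (Finset.mem_inter.1 huT).1⟩
  · rw [← hrest]
    intro v hv u huv
    have hvS := (Finset.mem_sdiff.1 hv).1
    exact Finset.mem_sdiff.2 ⟨hcl v hvS u huv, hnotT v hvS u huv⟩

theorem fval_succ_of_lastSlot {j : ℕ} {Y : Finset V} (hXU : ∀ v ∈ X, v ∉ sinksF prec)
    (hX : ∀ v ∈ X, ∀ u, prec u v → u ∉ sinksF prec → u ∈ X) (hj : j ≤ m) (hYX : Y ⊆ X)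
    (hY : ∀ a ∈ Y, ∀ b ∈ Y, ¬ prec a b) (hYm : Y.card ≤ m - j)
    (hi : i ≤ (readySinks prec (X \ Y)).card) (hf : fval prec m (i - j) t (X \ Y)) :
    fval prec m i (t + 1) X := by
  obtain ⟨hXY, K, hK, hKcard, σ, ⟨hσ, hcl⟩, hlen⟩ := hf
  set R := readySinks prec (X \ Y)
  have hKR : K ⊆ R := (predClosed_union_iff hXY hK).1 hcl
  -- The `i - (i - j) ≤ j` sinks missing from `K` are added to the last slot.
  obtain ⟨J, hJ, hJcard⟩ := Finset.exists_subset_card_eq (s := R \ K) (n := i - (i - j))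
    (by rw [Finset.card_sdiff_of_subset hKR]; omega)
  have hJR : J ⊆ R := hJ.trans Finset.sdiff_subset
  have hJK : Disjoint J K := Finset.disjoint_of_subset_left hJ Finset.sdiff_disjoint
  have hKJR : K ∪ J ⊆ R := Finset.union_subset hKR hJR
  have hRsinks : R ⊆ sinksF prec := readySinks_subset_sinksF _
  have hRpred : ∀ s ∈ R, ∀ u, prec u s → u ∈ X \ Y := fun s hs => (mem_readySinks.1 hs).2
  have hrest : (X ∪ (K ∪ J)) \ (Y ∪ J) = X \ Y ∪ K := by
    have hsX : ∀ v ∈ R, v ∉ X := fun v hv hvX => hXU v hvX (hRsinks hv)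
    ext v
    have := hsX v; have := @hKR v; have := @hJR v; have := @hYX v
    have : v ∈ J → v ∉ K := fun h => Finset.disjoint_left.1 hJK h
    simp only [Finset.mem_union, Finset.mem_sdiff]; tauto
  have hlast : ∀ u ∈ Y ∪ J, ∀ v ∈ X ∪ (K ∪ J), ¬ prec u v := by
    intro u hu v hv huv
    rcases Finset.mem_union.1 hu with huY | huJ
    · have huXY : u ∉ X \ Y := fun h => (Finset.mem_sdiff.1 h).2 huY
      rcases Finset.mem_union.1 hv with hvX | hvK
      · by_cases hvY : v ∈ Y
        · exact hY u huY v hvY huv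
        · exact huXY (hXY v (Finset.mem_sdiff.2 ⟨hvX, hvY⟩) u huv (hXU u (hYX huY)))
      · exact huXY (hRpred v (hKJR hvK) u huv)
    · exact not_prec_of_mem_sinksF (hRsinks (hJR huJ)) huv
  refine ⟨hX, K ∪ J, hKJR.trans hRsinks, by rw [Finset.card_union_of_disjoint hJK.symm]; omega,
    σ ++ [Y ∪ J], ⟨isSchedule_append_singleton_iff.2 ⟨Finset.union_subset_union hYX
      Finset.subset_union_right, (Finset.card_union_le _ _).trans (by omega), hlast, hrest ▸ hσ⟩,
    (predClosed_union_iff hX (hKJR.trans hRsinks)).2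
      (hKJR.trans (readySinks_mono Finset.sdiff_subset))⟩, by simpa using hlen⟩

end

theorem stmt11_general {V : Type*} [Fintype V] [DecidableEq V]
    (prec : V → V → Prop) [DecidableRel prec]
    (m i t : ℕ) (ht : 1 ≤ t) (X : Finset V)
    (hXU : ∀ v ∈ X, v ∉ sinksF prec) :
    fval prec m i t X ↔
      ((∀ v ∈ X, ∀ u, prec u v → u ∉ sinksF prec → u ∈ X) ∧
       ∃ j ≤ m, ∃ Y ⊆ X, (∀ a ∈ Y, ∀ b ∈ Y, ¬ prec a b) ∧ Y.card ≤ m - j ∧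
         i ≤ ((sinksF prec).filter fun s => ∀ u, prec u s → u ∈ X \ Y).card ∧
         fval prec m (i - j) (t - 1) (X \ Y)) := by
  obtain ⟨t, rfl⟩ : ∃ t', t = t' + 1 := ⟨t - 1, by omega⟩
  rw [Nat.add_sub_cancel]
  refine ⟨fun h => ⟨h.1, exists_lastSlot_of_fval_succ hXU h⟩, ?_⟩
  rintro ⟨hX, j, hj, Y, hYX, hY, hYm, hi, hf⟩
  exact fval_succ_of_lastSlot hXU hX hj hYX hY hYm hi hf

/-- The recurrence of the `O*(2^{n-|sinks|})` algorithm: for `t ≥ 1`,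
`f(i,t,X)` holds iff `X` is downward closed in `U` and there are `j ≤ m` and
`Y ⊆ X` such that `Y` is an antichain with `|Y| ≤ m − j`, at least `i` sinks
have all their predecessors in `X \ Y`, and `f(i−j, t−1, X \ Y)` holds. -/
theorem stmt11 {V : Type*} [Fintype V] [DecidableEq V]
    (prec : V → V → Prop) [DecidableRel prec]
    (htrans : Transitive prec) (hirr : Irreflexive prec)
    (m i t : ℕ) (ht : 1 ≤ t) (X : Finset V)
    (hXU : ∀ v ∈ X, v ∉ sinksF prec) :
    fval prec m i t X ↔
      ((∀ v ∈ X, ∀ u, prec u v → u ∉ sinksF prec → u ∈ X) ∧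
       ∃ j ≤ m, ∃ Y ⊆ X, (∀ a ∈ Y, ∀ b ∈ Y, ¬ prec a b) ∧ Y.card ≤ m - j ∧
         i ≤ ((sinksF prec).filter fun s => ∀ u, prec u s → u ∈ X \ Y).card ∧
         fval prec m (i - j) (t - 1) (X \ Y)) :=
  stmt11_general prec m i t ht X hXU
end
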